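/- arXiv:1902.05616 — 6 statements merged into one kernel-verified Lean document; each statement's English description precedes it below -/
import Mathlib

section
/- For any two probability measures P and Q, the squared Hellinger distance satisfies H²(P,Q) ≤ 2 - 2/√(1 + χ²(P‖Q)) ≤ χ²(P‖Q). -/
open MeasureTheory ENNReal Classical

/-- Squared Hellinger distance, computed with the dominating measure `ν = P + Q`. -/
noncomputable def sqHellinger {Ω : Type*} [MeasurableSpace Ω] (P Q : Measure Ω) : ℝ :=
  ∫ x, (Real.sqrt ((P.rnDeriv (P + Q)) x).toReal
        - Real.sqrt ((Q.rnDeriv (P + Q)) x).toReal) ^ 2 ∂(P + Q)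

/-- χ²-divergence: `∫ (dP/dQ)² dQ - 1` if `P ≪ Q`, and `∞` otherwise. -/
noncomputable def chiSq {Ω : Type*} [MeasurableSpace Ω] (P Q : Measure Ω) : ℝ≥0∞ :=
  if P ≪ Q then (∫⁻ x, (P.rnDeriv Q x) ^ 2 ∂Q) - 1 else ⊤

private lemma conj22 : Real.HolderConjugate 2 2 := Real.HolderConjugate.two_two

private lemma real_endgame {k : ℝ} (hk : 1 ≤ k) : 2 ≤ (k - 1) + 2 / k ^ ((1:ℝ)/2) := by
  set s := k ^ ((1:ℝ)/2) with hs
  have hs1 : 1 ≤ s := Real.one_le_rpow hk (by norm_num)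
  have hs2 : s ^ 2 = k := by
    rw [hs, ← Real.rpow_natCast (k ^ ((1:ℝ)/2)) 2, ← Real.rpow_mul (by linarith : (0:ℝ) ≤ k)]
    norm_num
  have hspos : (0:ℝ) < s := by linarith
  have key : 2 * s ≤ (k - 1) * s + 2 := by
    nlinarith [mul_nonneg (sq_nonneg (s-1)) (by linarith : (0:ℝ) ≤ s + 2)]
  have h2s : 2 - (k - 1) ≤ 2 / s := by rw [le_div_iff₀ hspos]; nlinarith
  linarith [div_nonneg (by norm_num : (0:ℝ) ≤ 2) hspos.le]

/-- `H²(P,Q) ≤ 2 - 2/√(1 + χ²(P‖Q)) ≤ χ²(P‖Q)`. -/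
theorem hellinger_le_chiSq {Ω : Type*} [MeasurableSpace Ω]
    (P Q : Measure Ω) [IsProbabilityMeasure P] [IsProbabilityMeasure Q] :
    ENNReal.ofReal (sqHellinger P Q) ≤ 2 - 2 / (1 + chiSq P Q) ^ ((1 : ℝ) / 2) ∧
      2 - 2 / (1 + chiSq P Q) ^ ((1 : ℝ) / 2) ≤ chiSq P Q := by
  set ν : Measure Ω := P + Q with hν
  set p : Ω → ℝ≥0∞ := P.rnDeriv ν with hp
  set q : Ω → ℝ≥0∞ := Q.rnDeriv ν with hq
  have hmp : Measurable p := Measure.measurable_rnDeriv _ _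
  have hmq : Measurable q := Measure.measurable_rnDeriv _ _
  have hPν : P ≪ ν := Measure.absolutelyContinuous_of_le (Measure.le_add_right le_rfl)
  have hQν : Q ≪ ν := Measure.absolutelyContinuous_of_le (Measure.le_add_left le_rfl)
  have hip : ∫⁻ x, p x ∂ν = 1 := by rw [Measure.lintegral_rnDeriv hPν, measure_univ]
  have hiq : ∫⁻ x, q x ∂ν = 1 := by rw [Measure.lintegral_rnDeriv hQν, measure_univ]
  have hpq1 : ∀ᵐ x ∂ν, p x + q x = 1 := by
    filter_upwards [(Measure.rnDeriv_add' P Q ν).symm, Measure.rnDeriv_self ν] with x h1 h2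
    rw [← h2]; exact h1
  have hple : ∀ᵐ x ∂ν, p x ≤ 1 := by
    filter_upwards [hpq1] with x h using le_of_le_of_eq (le_add_right le_rfl) h
  have hqle : ∀ᵐ x ∂ν, q x ≤ 1 := by
    filter_upwards [hpq1] with x h using le_of_le_of_eq (le_add_left le_rfl) h
  -- the sqrt integrand and I
  set I : ℝ≥0∞ := ∫⁻ x, (p x * q x) ^ ((1:ℝ)/2) ∂ν with hI
  have hIle : I ≤ 2 := by
    calc I ≤ ∫⁻ _, 1 ∂ν := by
          refine lintegral_mono_ae ?_
          filter_upwards [hple, hqle] with x h1 h2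
          calc (p x * q x) ^ ((1:ℝ)/2) ≤ (1 : ℝ≥0∞) ^ ((1:ℝ)/2) :=
                ENNReal.rpow_le_rpow (by simpa using mul_le_mul' h1 h2) (by norm_num)
            _ = 1 := ENNReal.one_rpow _
      _ = 2 := by simp [hν]; norm_num
  have hIne : I ≠ ⊤ := (lt_of_le_of_lt hIle (by norm_num)).ne
  -- real-valued versions
  have hFint : Integrable (fun x => (p x).toReal) ν :=
    integrable_toReal_of_lintegral_ne_top hmp.aemeasurable (by rw [hip]; exact one_ne_top)
  have hGint : Integrable (fun x => (q x).toReal) ν :=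
    integrable_toReal_of_lintegral_ne_top hmq.aemeasurable (by rw [hiq]; exact one_ne_top)
  have hFI : ∫ x, (p x).toReal ∂ν = 1 := by
    rw [integral_toReal hmp.aemeasurable
      (by filter_upwards [hple] with x h using lt_of_le_of_lt h one_lt_top), hip]; simp
  have hGI : ∫ x, (q x).toReal ∂ν = 1 := by
    rw [integral_toReal hmq.aemeasurable
      (by filter_upwards [hqle] with x h using lt_of_le_of_lt h one_lt_top), hiq]; simp
  set S : Ω → ℝ := fun x => ((p x * q x) ^ ((1:ℝ)/2)).toReal with hS
  have hSmeas : Measurable S := ((hmp.mul hmq).pow_const _).ennreal_toReal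
  have hSint : Integrable S ν :=
    integrable_toReal_of_lintegral_ne_top ((hmp.mul hmq).pow_const _).aemeasurable (by exact hIne)
  have hJI : ∫ x, S x ∂ν = I.toReal := by
    rw [integral_toReal (f := fun x => (p x * q x) ^ ((1:ℝ)/2)) ((hmp.mul hmq).pow_const _).aemeasurable]
    filter_upwards [hple, hqle] with x h1 h2
    calc (p x * q x) ^ ((1:ℝ)/2) ≤ (1:ℝ≥0∞) ^ ((1:ℝ)/2) :=
          ENNReal.rpow_le_rpow (by simpa using mul_le_mul' h1 h2) (by norm_num)
      _ < ⊤ := by simp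
  have hSsq : ∀ᵐ x ∂ν, S x = Real.sqrt ((p x).toReal) * Real.sqrt ((q x).toReal) := by
    filter_upwards [hple, hqle] with x h1 h2
    show ((p x * q x) ^ ((1:ℝ)/2)).toReal = _
    rw [← ENNReal.toReal_rpow, ENNReal.toReal_mul,
      ← Real.sqrt_eq_rpow, Real.sqrt_mul ENNReal.toReal_nonneg]
  -- Hellinger expansion
  have hHell : sqHellinger P Q = 2 - 2 * I.toReal := by
    have : sqHellinger P Q = ∫ x, ((p x).toReal + (q x).toReal - 2 * S x) ∂ν := by
      unfold sqHellinger
      rw [← hν, ← hp, ← hq]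
      refine integral_congr_ae ?_
      filter_upwards [hSsq] with x hx
      have h1 : Real.sqrt ((p x).toReal) ^ 2 = (p x).toReal := Real.sq_sqrt ENNReal.toReal_nonneg
      have h2 : Real.sqrt ((q x).toReal) ^ 2 = (q x).toReal := Real.sq_sqrt ENNReal.toReal_nonneg
      rw [hx]; nlinarith [h1, h2]
    have hFG : Integrable (fun x => (p x).toReal + (q x).toReal) ν := hFint.add hGint
    have h2S : Integrable (fun x => 2 * S x) ν := hSint.const_mul 2
    rw [this, integral_sub hFG h2S, integral_add hFint hGint, integral_const_mul, hFI, hGI, hJI]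
    ring
  have hJnn : 0 ≤ I.toReal := ENNReal.toReal_nonneg
  have hofH : ENNReal.ofReal (sqHellinger P Q) = 2 - 2 * I := by
    rw [hHell, ENNReal.ofReal_sub _ (by positivity), ENNReal.ofReal_mul (by norm_num),
      ENNReal.ofReal_toReal hIne]
    norm_num
  by_cases hPQ : P ≪ Q
  · -- helpers for rpow arithmetic
    have hhalf : ∀ a : ℝ≥0∞, (a ^ ((1:ℝ)/2)) ^ (2:ℝ) = a := fun a => by
      rw [← ENNReal.rpow_mul]; norm_num
    have hquarter : ∀ a : ℝ≥0∞, (a ^ ((1:ℝ)/4)) ^ (2:ℝ) = a ^ ((1:ℝ)/2) := fun a => by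
      rw [← ENNReal.rpow_mul]; norm_num
    set r : Ω → ℝ≥0∞ := P.rnDeriv Q with hr
    have hmr : Measurable r := Measure.measurable_rnDeriv _ _
    set L : ℝ≥0∞ := ∫⁻ x, r x ^ 2 ∂Q with hL
    have hchi : chiSq P Q = L - 1 := if_pos hPQ
    -- a.e., q x = 0 → p x = 0
    have hA : MeasurableSet {x | q x = 0} := hmq (measurableSet_singleton 0)
    have hQA : Q {x | q x = 0} = 0 := by
      rw [← Measure.setLIntegral_rnDeriv hQν, ← hq,
        setLIntegral_congr_fun hA (fun x hx => hx)]
      simp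
    have hq0p0 : ∀ᵐ x ∂ν, q x = 0 → p x = 0 := by
      have h0 : ∫⁻ x in {x | q x = 0}, p x ∂ν = 0 := by
        rw [hp, Measure.setLIntegral_rnDeriv hPν]
        exact hPQ hQA
      rw [lintegral_eq_zero_iff hmp] at h0
      have := (ae_restrict_iff' hA).mp h0
      filter_upwards [this] with x hx h0x using hx h0x
    -- Cauchy-Schwarz for lintegrals
    have hCS : ∀ f g : Ω → ℝ≥0∞, Measurable f → Measurable g →
        ∫⁻ x, f x * g x ∂ν
          ≤ (∫⁻ x, f x ^ (2:ℝ) ∂ν) ^ ((1:ℝ)/2) * (∫⁻ x, g x ^ (2:ℝ) ∂ν) ^ ((1:ℝ)/2) := by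
      intro f g hf hg
      have := ENNReal.lintegral_mul_le_Lp_mul_Lq ν conj22 hf.aemeasurable hg.aemeasurable
      simpa using this
    set K : ℝ≥0∞ := ∫⁻ x, p x ^ 2 * (q x)⁻¹ ∂ν with hK
    set M : ℝ≥0∞ := ∫⁻ x, (p x ^ 3 * (q x)⁻¹) ^ ((1:ℝ)/2) ∂ν with hM
    -- CS3 : 1 ≤ K^{1/2}
    have hfg3 : ∀ᵐ x ∂ν, p x = ((p x ^ 2 * (q x)⁻¹) ^ ((1:ℝ)/2)) * (q x ^ ((1:ℝ)/2)) := by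
      filter_upwards [hq0p0, hqle] with x h0 h2
      rcases eq_or_ne (q x) 0 with hq0 | hq0
      · rw [hq0, h0 hq0]; simp
      · have hqt : q x ≠ ⊤ := (lt_of_le_of_lt h2 one_lt_top).ne
        rw [← ENNReal.mul_rpow_of_nonneg _ _ (by norm_num : (0:ℝ) ≤ 1/2)]
        have he : p x ^ 2 * (q x)⁻¹ * q x = p x ^ 2 * ((q x) * (q x)⁻¹) := by ring
        rw [he, ENNReal.mul_inv_cancel hq0 hqt, mul_one,
          ← ENNReal.rpow_natCast (p x) 2, ← ENNReal.rpow_mul]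
        norm_num
    have hCS3 : (1:ℝ≥0∞) ≤ K ^ ((1:ℝ)/2) := by
      have h := hCS (fun x => (p x ^ 2 * (q x)⁻¹) ^ ((1:ℝ)/2)) (fun x => q x ^ ((1:ℝ)/2))
        (by fun_prop) (hmq.pow_const _)
      simp only [hhalf] at h
      rw [← lintegral_congr_ae hfg3, hip, hiq] at h
      simpa using h
    have hK1' : (1:ℝ≥0∞) ≤ K := by
      have := ENNReal.rpow_le_rpow hCS3 (by norm_num : (0:ℝ) ≤ 2)
      rwa [ENNReal.one_rpow, hhalf] at this
    -- CS1 : 1 ≤ I^{1/2} * M^{1/2}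
    have hfg1 : ∀ᵐ x ∂ν, p x = ((p x * q x) ^ ((1:ℝ)/4)) * ((p x ^ 3 * (q x)⁻¹) ^ ((1:ℝ)/4)) := by
      filter_upwards [hq0p0, hqle] with x h0 h2
      rcases eq_or_ne (q x) 0 with hq0 | hq0
      · rw [hq0, h0 hq0]; simp
      · have hqt : q x ≠ ⊤ := (lt_of_le_of_lt h2 one_lt_top).ne
        rw [← ENNReal.mul_rpow_of_nonneg _ _ (by norm_num : (0:ℝ) ≤ 1/4)]
        have he : p x * q x * (p x ^ 3 * (q x)⁻¹) = p x ^ 4 * ((q x) * (q x)⁻¹) := by ring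
        rw [he, ENNReal.mul_inv_cancel hq0 hqt, mul_one,
          ← ENNReal.rpow_natCast (p x) 4, ← ENNReal.rpow_mul]
        norm_num
    have hCS1 : (1:ℝ≥0∞) ≤ I ^ ((1:ℝ)/2) * M ^ ((1:ℝ)/2) := by
      have h := hCS (fun x => (p x * q x) ^ ((1:ℝ)/4))
        (fun x => (p x ^ 3 * (q x)⁻¹) ^ ((1:ℝ)/4))
        ((hmp.mul hmq).pow_const _) (by fun_prop)
      simp only [hquarter] at h
      rw [← lintegral_congr_ae hfg1, hip] at h
      exact h
    -- CS2 : M ≤ K^{1/2}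
    have hfg2 : ∀ x, (p x ^ 3 * (q x)⁻¹) ^ ((1:ℝ)/2)
        = ((p x ^ 2 * (q x)⁻¹) ^ ((1:ℝ)/2)) * ((p x) ^ ((1:ℝ)/2)) := fun x => by
      rw [← ENNReal.mul_rpow_of_nonneg _ _ (by norm_num : (0:ℝ) ≤ 1/2)]
      congr 1; ring
    have hCS2 : M ≤ K ^ ((1:ℝ)/2) := by
      have h := hCS (fun x => (p x ^ 2 * (q x)⁻¹) ^ ((1:ℝ)/2)) (fun x => (p x) ^ ((1:ℝ)/2))
        (by fun_prop) (hmp.pow_const _)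
      simp only [hhalf] at h
      rw [hip] at h
      calc M = ∫⁻ x, ((p x ^ 2 * (q x)⁻¹) ^ ((1:ℝ)/2)) * ((p x) ^ ((1:ℝ)/2)) ∂ν :=
            lintegral_congr hfg2
        _ ≤ K ^ ((1:ℝ)/2) * 1 ^ ((1:ℝ)/2) := h
        _ = K ^ ((1:ℝ)/2) := by simp
    -- combine: 1 ≤ I * K^{1/2}
    have hIK : (1:ℝ≥0∞) ≤ I * K ^ ((1:ℝ)/2) := by
      have h2 : (1:ℝ≥0∞) ≤ (I * K ^ ((1:ℝ)/2)) ^ ((1:ℝ)/2) := by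
        rw [ENNReal.mul_rpow_of_nonneg _ _ (by norm_num : (0:ℝ) ≤ 1/2)]
        exact hCS1.trans (mul_le_mul_right (ENNReal.rpow_le_rpow hCS2 (by norm_num)) _)
      have := ENNReal.rpow_le_rpow h2 (by norm_num : (0:ℝ) ≤ 2)
      rwa [ENNReal.one_rpow, hhalf] at this
    -- K = L
    have hrq : r * q =ᵐ[ν] p := Measure.rnDeriv_mul_rnDeriv hPQ
    have hKL : K = L := by
      rw [hK, hL, ← lintegral_rnDeriv_mul hQν ((hmr.pow_const 2)).aemeasurable]
      refine lintegral_congr_ae ?_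
      filter_upwards [hrq, hq0p0, hqle] with x hx h0 h2
      simp only [Pi.mul_apply] at hx
      rcases eq_or_ne (q x) 0 with hq0 | hq0
      · rw [hq0, h0 hq0]; simp; exact Or.inl hq0
      · have hqt : q x ≠ ⊤ := (lt_of_le_of_lt h2 one_lt_top).ne
        have hrx : r x = p x * (q x)⁻¹ := by
          rw [← hx, mul_assoc, ENNReal.mul_inv_cancel hq0 hqt, mul_one]
        rw [hrx, mul_pow]
        calc p x ^ 2 * (q x)⁻¹ = p x ^ 2 * ((q x)⁻¹ * ((q x) * (q x)⁻¹)) := by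
              rw [ENNReal.mul_inv_cancel hq0 hqt, mul_one]
          _ = q x * (p x ^ 2 * ((q x)⁻¹) ^ 2) := by ring
    have hL1 : (1:ℝ≥0∞) ≤ L := hKL ▸ hK1'
    have h1chi : 1 + chiSq P Q = K := by
      rw [hchi, hKL]; exact add_tsub_cancel_of_le hL1
    constructor
    · rw [hofH, h1chi]
      refine tsub_le_tsub_left ?_ 2
      rw [div_eq_mul_inv]
      refine mul_le_mul_right ?_ 2
      rcases eq_or_ne (K ^ ((1:ℝ)/2)) ⊤ with htop | htop
      · rw [htop]; simp
      · have hne0 : K ^ ((1:ℝ)/2) ≠ 0 := (zero_lt_one.trans_le hCS3).ne'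
        calc (K ^ ((1:ℝ)/2))⁻¹ = 1 * (K ^ ((1:ℝ)/2))⁻¹ := (one_mul _).symm
          _ ≤ (I * K ^ ((1:ℝ)/2)) * (K ^ ((1:ℝ)/2))⁻¹ := mul_le_mul_left hIK _
          _ = I := by rw [mul_assoc, ENNReal.mul_inv_cancel hne0 htop, mul_one]
    · rw [h1chi, hchi, ← hKL]
      rcases eq_or_ne K ⊤ with hKt | hKt
      · rw [hKt]
        have : (⊤:ℝ≥0∞) - 1 = ⊤ := by simp
        rw [this]; exact le_top
      · rw [tsub_le_iff_right]
        have hk : 1 ≤ K.toReal := by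
          have := ENNReal.toReal_mono hKt hK1'
          simpa using this
        have hfin1 : K - 1 ≠ ⊤ := (tsub_le_self.trans_lt (lt_top_iff_ne_top.mpr hKt)).ne
        have hrne : K ^ ((1:ℝ)/2) ≠ 0 := (zero_lt_one.trans_le hCS3).ne'
        have hfin2 : (2:ℝ≥0∞) / K ^ ((1:ℝ)/2) ≠ ⊤ := (ENNReal.div_lt_top (by norm_num) hrne).ne
        refine (ENNReal.toReal_le_toReal (by norm_num) (ENNReal.add_ne_top.mpr ⟨hfin1, hfin2⟩)).mp ?_
        rw [ENNReal.toReal_add hfin1 hfin2, ENNReal.toReal_div, ← ENNReal.toReal_rpow,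
          ENNReal.toReal_sub_of_le hK1' hKt]
        simpa using real_endgame hk
  · have hchi : chiSq P Q = ⊤ := if_neg hPQ
    rw [hchi]
    constructor
    · have : (1 + (⊤:ℝ≥0∞)) ^ ((1:ℝ)/2) = ⊤ := by
        rw [add_top, ENNReal.top_rpow_of_pos (by norm_num)]
      rw [this, ENNReal.div_top, tsub_zero, hofH]
      exact tsub_le_self.trans le_rfl
    · exact le_top
end

section
/- For any two probability measures P and Q, one has (1/2)·H²(P,Q) ≤ χ²(P ‖ (P+Q)/2) ≤ H²(P,Q), where (P+Q)/2 denotes the mixture assigning equal weights to P and Q. -/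
open MeasureTheory ENNReal Classical

private lemma aux_pt {a b : ℝ} (ha : 0 ≤ a) (hb : 0 ≤ b) (hab : a + b = 1) :
    (Real.sqrt a - Real.sqrt b) ^ 2 ≤ (a - b) ^ 2 ∧
      (a - b) ^ 2 ≤ 2 * (Real.sqrt a - Real.sqrt b) ^ 2 := by
  have h1 : Real.sqrt a ^ 2 = a := Real.sq_sqrt ha
  have h2 : Real.sqrt b ^ 2 = b := Real.sq_sqrt hb
  have hsa := Real.sqrt_nonneg a
  have hsb := Real.sqrt_nonneg b
  constructor <;>
    nlinarith [sq_nonneg (Real.sqrt a - Real.sqrt b), sq_nonneg (Real.sqrt a + Real.sqrt b),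
      mul_nonneg hsa hsb, sq_nonneg ((Real.sqrt a - Real.sqrt b) ^ 2),
      mul_nonneg (mul_nonneg hsa hsb) (sq_nonneg (Real.sqrt a - Real.sqrt b))]

/-- `(1/2)·H²(P,Q) ≤ χ²(P ‖ (P+Q)/2) ≤ H²(P,Q)` where `(P+Q)/2` is the equal-weights mixture. -/
theorem hellinger_chiSq_midpoint {Ω : Type*} [MeasurableSpace Ω]
    (P Q : Measure Ω) [IsProbabilityMeasure P] [IsProbabilityMeasure Q] :
    ENNReal.ofReal (sqHellinger P Q) / 2 ≤ chiSq P ((2 : ℝ≥0∞)⁻¹ • (P + Q)) ∧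
      chiSq P ((2 : ℝ≥0∞)⁻¹ • (P + Q)) ≤ ENNReal.ofReal (sqHellinger P Q) := by
  set ν : Measure Ω := P + Q with hν
  set M : Measure Ω := (2 : ℝ≥0∞)⁻¹ • ν with hM
  set p : Ω → ℝ≥0∞ := P.rnDeriv ν with hp
  set q : Ω → ℝ≥0∞ := Q.rnDeriv ν with hq
  set a : Ω → ℝ := fun x => (p x).toReal with ha
  set b : Ω → ℝ := fun x => (q x).toReal with hb
  have hPle : P ≤ ν := Measure.le_add_right le_rfl
  have hQle : Q ≤ ν := Measure.le_add_left le_rfl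
  have hPν : P ≪ ν := Measure.absolutelyContinuous_of_le hPle
  have hνM : ν ≪ M := Measure.absolutelyContinuous_smul (by simp)
  have hPM : P ≪ M := hPν.trans hνM
  have hp1 : p ≤ᵐ[ν] 1 := Measure.rnDeriv_le_one_of_le hPle
  have hq1 : q ≤ᵐ[ν] 1 := Measure.rnDeriv_le_one_of_le hQle
  have hpq : ∀ᵐ x ∂ν, p x + q x = 1 := by
    filter_upwards [Measure.rnDeriv_add' P Q ν, Measure.rnDeriv_self ν] with x h1 h2
    calc p x + q x = (P.rnDeriv ν + Q.rnDeriv ν) x := rfl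
      _ = (P + Q).rnDeriv ν x := h1.symm
      _ = ν.rnDeriv ν x := rfl
      _ = 1 := h2
  -- a.e. real facts
  have hab : ∀ᵐ x ∂ν, a x + b x = 1 ∧ a x ≤ 1 ∧ b x ≤ 1 := by
    filter_upwards [hpq, hp1, hq1] with x h1 h2 h3
    have hpx : p x ≠ ⊤ := (lt_of_le_of_lt h2 (by norm_num)).ne
    have hqx : q x ≠ ⊤ := (lt_of_le_of_lt h3 (by norm_num)).ne
    refine ⟨?_, ?_, ?_⟩
    · rw [ha, hb]; simp only
      rw [← ENNReal.toReal_add hpx hqx, h1]; simp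
    · simpa [ha] using ENNReal.toReal_mono (by norm_num) h2
    · simpa [hb] using ENNReal.toReal_mono (by norm_num) h3
  have hameas : Measurable a := (Measure.measurable_rnDeriv P ν).ennreal_toReal
  have hbmeas : Measurable b := (Measure.measurable_rnDeriv Q ν).ennreal_toReal
  -- integrabilities
  have hint_sq : Integrable (fun x => (Real.sqrt (a x) - Real.sqrt (b x)) ^ 2) ν := by
    refine ⟨((hameas.sqrt.sub hbmeas.sqrt).pow_const 2).aestronglyMeasurable,
      HasFiniteIntegral.of_bounded (C := 1) ?_⟩
    filter_upwards [hab] with x ⟨h1, h2, h3⟩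
    have ha0 : 0 ≤ a x := ENNReal.toReal_nonneg
    have hb0 : 0 ≤ b x := ENNReal.toReal_nonneg
    have hsa : Real.sqrt (a x) ≤ 1 := Real.sqrt_le_one.mpr h2
    have hsb : Real.sqrt (b x) ≤ 1 := Real.sqrt_le_one.mpr h3
    have hsa0 := Real.sqrt_nonneg (a x)
    have hsb0 := Real.sqrt_nonneg (b x)
    rw [Real.norm_eq_abs, abs_of_nonneg (sq_nonneg _)]
    nlinarith
  have hint_ab : Integrable (fun x => (a x - b x) ^ 2) ν := by
    refine ⟨((hameas.sub hbmeas).pow_const 2).aestronglyMeasurable,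
      HasFiniteIntegral.of_bounded (C := 1) ?_⟩
    filter_upwards [hab] with x ⟨h1, h2, h3⟩
    have ha0 : 0 ≤ a x := ENNReal.toReal_nonneg
    have hb0 : 0 ≤ b x := ENNReal.toReal_nonneg
    rw [Real.norm_eq_abs, abs_of_nonneg (sq_nonneg _)]
    nlinarith
  have hint_a2 : Integrable (fun x => a x ^ 2) ν := by
    refine ⟨(hameas.pow_const 2).aestronglyMeasurable,
      HasFiniteIntegral.of_bounded (C := 1) ?_⟩
    filter_upwards [hab] with x ⟨h1, h2, h3⟩
    have ha0 : 0 ≤ a x := ENNReal.toReal_nonneg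
    rw [Real.norm_eq_abs, abs_of_nonneg (sq_nonneg _)]
    nlinarith
  have hint_a : Integrable a ν := Measure.integrable_toReal_rnDeriv
  -- integral of a
  have hIa : ∫ x, a x ∂ν = 1 := by
    rw [ha]; simp only [hp]
    rw [Measure.integral_toReal_rnDeriv hPν]
    simp
  have hν_univ : ν Set.univ = 2 := by
    rw [hν]; simp [one_add_one_eq_two]
  -- lintegral of p^2
  set I : ℝ≥0∞ := ∫⁻ x, (p x) ^ 2 ∂ν with hI
  have hI_le : I ≤ 2 := by
    calc I ≤ ∫⁻ _, 1 ∂ν := by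
          refine lintegral_mono_ae ?_
          filter_upwards [hp1] with x hx
          calc (p x) ^ 2 ≤ 1 ^ 2 := pow_le_pow_left' hx 2
            _ = 1 := one_pow 2
      _ = ν Set.univ := lintegral_one
      _ = 2 := hν_univ
  have hI_ne : I ≠ ⊤ := (lt_of_le_of_lt hI_le (by norm_num)).ne
  set Ia : ℝ := ∫ x, a x ^ 2 ∂ν with hIa2
  have hIeq : I = ENNReal.ofReal Ia := by
    have := integral_toReal (μ := ν) (f := fun x => (p x) ^ 2)
      ((Measure.measurable_rnDeriv P ν).pow_const 2).aemeasurable ?_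
    · rw [hIa2]
      have harw : (fun x => a x ^ 2) = fun x => ((p x) ^ 2).toReal := by
        funext x; rw [ha]; simp [ENNReal.toReal_pow]
      rw [harw, this, ENNReal.ofReal_toReal hI_ne]
    · filter_upwards [hp1] with x hx
      exact lt_of_le_of_lt (pow_le_pow_left' hx 2) (by norm_num)
  -- the chi-square value
  have hchi : chiSq P M = ENNReal.ofReal (2 * Ia - 1) := by
    rw [chiSq, if_pos hPM]
    have hrn : P.rnDeriv M =ᵐ[ν] (2 : ℝ≥0∞) • p := by
      have := Measure.rnDeriv_smul_right_of_ne_top P ν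
        (r := (2 : ℝ≥0∞)⁻¹) (by simp) (by simp)
      simpa using this
    have hMν : M ≪ ν := Measure.AbsolutelyContinuous.rfl.smul_left _
    have hlin : ∫⁻ x, (P.rnDeriv M x) ^ 2 ∂M = 2 * I := by
      have h4 : ∫⁻ x, (P.rnDeriv M x) ^ 2 ∂M = ∫⁻ x, 4 * (p x) ^ 2 ∂M := by
        refine lintegral_congr_ae ?_
        filter_upwards [hMν.ae_eq hrn] with x hx
        rw [hx]
        show ((2 : ℝ≥0∞) • p x) ^ 2 = 4 * p x ^ 2
        rw [smul_eq_mul]; ring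
      rw [h4, hM, lintegral_smul_measure,
        lintegral_const_mul _ ((Measure.measurable_rnDeriv P ν).pow_const 2), ← hI,
        smul_eq_mul, ← mul_assoc]
      congr 1
      rw [show (4 : ℝ≥0∞) = 2 * 2 by norm_num, ← mul_assoc,
        ENNReal.inv_mul_cancel (by norm_num) (by norm_num), one_mul]
    rw [hlin, hIeq, ← ENNReal.ofReal_ofNat 2, ← ENNReal.ofReal_mul (by norm_num),
      ← ENNReal.ofReal_one, ← ENNReal.ofReal_sub _ (by norm_num)]
  -- key real identity: ∫ (a-b)^2 = 4 Ia - 2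
  have hkey : ∫ x, (a x - b x) ^ 2 ∂ν = 4 * Ia - 2 := by
    have h1 : ∫ x, (a x - b x) ^ 2 ∂ν = ∫ x, (4 * a x ^ 2 - 4 * a x + 1) ∂ν := by
      refine integral_congr_ae ?_
      filter_upwards [hab] with x ⟨h1, _, _⟩
      nlinarith
    rw [h1]
    have h2 : Integrable (fun x => 4 * a x ^ 2 - 4 * a x) ν :=
      (hint_a2.const_mul 4).sub (hint_a.const_mul 4)
    rw [integral_add h2 (integrable_const 1), integral_sub (hint_a2.const_mul 4)
      (hint_a.const_mul 4), integral_const_mul, integral_const_mul, hIa, integral_const,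
      measureReal_def, hν_univ, ← hIa2]
    simp
    ring
  have hH : sqHellinger P Q = ∫ x, (Real.sqrt (a x) - Real.sqrt (b x)) ^ 2 ∂ν := rfl
  -- two real inequalities
  have hreal1 : sqHellinger P Q ≤ ∫ x, (a x - b x) ^ 2 ∂ν := by
    rw [hH]
    refine integral_mono_ae hint_sq hint_ab ?_
    filter_upwards [hab] with x ⟨h1, _, _⟩
    exact (aux_pt ENNReal.toReal_nonneg ENNReal.toReal_nonneg h1).1
  have hreal2 : ∫ x, (a x - b x) ^ 2 ∂ν ≤ 2 * sqHellinger P Q := by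
    rw [hH, ← integral_const_mul]
    refine integral_mono_ae hint_ab (hint_sq.const_mul 2) ?_
    filter_upwards [hab] with x ⟨h1, _, _⟩
    exact (aux_pt ENNReal.toReal_nonneg ENNReal.toReal_nonneg h1).2
  constructor
  · rw [hchi]
    have hdiv : ENNReal.ofReal (sqHellinger P Q) / 2
        = ENNReal.ofReal (sqHellinger P Q / 2) := by
      rw [ENNReal.ofReal_div_of_pos (by norm_num), ENNReal.ofReal_ofNat]
    rw [hdiv]
    exact ENNReal.ofReal_le_ofReal (by linarith)
  · rw [hchi]
    exact ENNReal.ofReal_le_ofReal (by linarith)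
end

section
/- Tensorization of the χ²-divergence: for probability measures P, Q and any n ≥ 1, χ²(P^⊗n ‖ Q^⊗n) = (1 + χ²(P‖Q))^n - 1. In particular, if χ²(P‖Q) ≤ 1/n then χ²(P^⊗n ‖ Q^⊗n) ≤ e - 1. -/
open MeasureTheory ENNReal Classical

/-- Fubini for products of nonneg functions over a finite product measure. -/
lemma lintegral_pi_prod {Ω : Type*} [MeasurableSpace Ω] (μ : Measure Ω) [SigmaFinite μ] :
    ∀ (n : ℕ) (f : Fin n → Ω → ℝ≥0∞), (∀ i, Measurable (f i)) →
      ∫⁻ x : Fin n → Ω, ∏ i, f i (x i) ∂(Measure.pi fun _ => μ)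
        = ∏ i, ∫⁻ x, f i x ∂μ := by
  intro n
  induction n with
  | zero =>
    intro f hf
    simp [Measure.pi_of_empty (fun _ : Fin 0 => μ)]
  | succ n ih =>
    intro f hf
    have hmp := MeasureTheory.measurePreserving_piFinSuccAbove
      (fun _ : Fin (n + 1) => μ) 0
    set e := MeasurableEquiv.piFinSuccAbove (fun _ : Fin (n + 1) => Ω) 0
    have hF : Measurable (fun p : Ω × (Fin n → Ω) =>
        f 0 p.1 * ∏ j, f ((0 : Fin (n+1)).succAbove j) (p.2 j)) := by
      apply Measurable.mul
      · exact (hf 0).comp measurable_fst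
      · exact Finset.measurable_prod _ fun j _ =>
          (hf _).comp ((measurable_pi_apply j).comp measurable_snd)
    calc ∫⁻ x : Fin (n+1) → Ω, ∏ i, f i (x i) ∂(Measure.pi fun _ => μ)
        = ∫⁻ x : Fin (n+1) → Ω,
            f 0 ((e x).1) * ∏ j, f ((0 : Fin (n+1)).succAbove j) ((e x).2 j)
            ∂(Measure.pi fun _ => μ) := by
          apply lintegral_congr
          intro x
          rw [Fin.prod_univ_succAbove (fun i => f i (x i)) 0]
          rfl
      _ = ∫⁻ p : Ω × (Fin n → Ω),
            f 0 p.1 * ∏ j, f ((0 : Fin (n+1)).succAbove j) (p.2 j)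
            ∂(μ.prod (Measure.pi fun _ => μ)) := hmp.lintegral_comp hF
      _ = (∫⁻ x, f 0 x ∂μ) * ∫⁻ y : Fin n → Ω,
            ∏ j, f ((0 : Fin (n+1)).succAbove j) (y j) ∂(Measure.pi fun _ => μ) := by
          exact lintegral_prod_mul (hf 0).aemeasurable
            (Finset.measurable_prod _ fun j _ =>
              (hf _).comp (measurable_pi_apply j)).aemeasurable
      _ = (∫⁻ x, f 0 x ∂μ) * ∏ j, ∫⁻ x, f ((0 : Fin (n+1)).succAbove j) x ∂μ := by
          rw [ih _ fun j => hf _]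
      _ = ∏ i, ∫⁻ x, f i x ∂μ := by
          rw [Fin.prod_univ_succAbove (fun i => ∫⁻ x, f i x ∂μ) 0]

/-- The n-fold product of `P` is the density `∏ dP/dQ(x i)` against the n-fold product of `Q`. -/
lemma pi_eq_withDensity {Ω : Type*} [MeasurableSpace Ω]
    (P Q : Measure Ω) [IsProbabilityMeasure P] [IsProbabilityMeasure Q]
    (hPQ : P ≪ Q) (n : ℕ) :
    (Measure.pi fun _ : Fin n => P)
      = (Measure.pi fun _ : Fin n => Q).withDensity
          (fun x => ∏ i, P.rnDeriv Q (x i)) := by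
  set f := P.rnDeriv Q with hf
  have hfm : Measurable f := Measure.measurable_rnDeriv P Q
  refine Measure.pi_eq fun s hs => ?_
  have hg : Measurable fun x : Fin n → Ω => ∏ i, f (x i) :=
    Finset.measurable_prod _ fun i _ => hfm.comp (measurable_pi_apply i)
  rw [withDensity_apply _ (MeasurableSet.univ_pi hs), ← lintegral_indicator
    (MeasurableSet.univ_pi hs)]
  have hind : ∀ x : Fin n → Ω,
      (Set.pi Set.univ s).indicator (fun x => ∏ i, f (x i)) x
        = ∏ i, (s i).indicator f (x i) := by
    intro x
    by_cases hx : x ∈ Set.pi Set.univ s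
    · rw [Set.indicator_of_mem hx]
      exact Finset.prod_congr rfl fun i _ =>
        (Set.indicator_of_mem (hx i (Set.mem_univ i)) f).symm
    · rw [Set.indicator_of_notMem hx]
      rw [Set.mem_univ_pi] at hx
      push_neg at hx
      obtain ⟨i, hi⟩ := hx
      exact (Finset.prod_eq_zero (Finset.mem_univ i)
        (by rw [Set.indicator_of_notMem hi])).symm
  calc ∫⁻ x, (Set.pi Set.univ s).indicator (fun x => ∏ i, f (x i)) x
          ∂(Measure.pi fun _ : Fin n => Q)
      = ∫⁻ x : Fin n → Ω, ∏ i, (s i).indicator f (x i)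
          ∂(Measure.pi fun _ : Fin n => Q) := lintegral_congr hind
    _ = ∏ i, ∫⁻ x, (s i).indicator f x ∂Q :=
        lintegral_pi_prod Q n _ fun i => hfm.indicator (hs i)
    _ = ∏ i, P (s i) := by
        refine Finset.prod_congr rfl fun i _ => ?_
        rw [lintegral_indicator (hs i), Measure.setLIntegral_rnDeriv hPQ]

/-- Tensorization of the χ²-divergence: `χ²(P^⊗n ‖ Q^⊗n) = (1 + χ²(P‖Q))^n - 1`;
in particular, if `χ²(P‖Q) ≤ 1/n` then `χ²(P^⊗n ‖ Q^⊗n) ≤ e - 1`. -/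
theorem chiSq_tensorization {Ω : Type*} [MeasurableSpace Ω]
    (P Q : Measure Ω) [IsProbabilityMeasure P] [IsProbabilityMeasure Q]
    (n : ℕ) (hn : 1 ≤ n) :
    chiSq (Measure.pi fun _ : Fin n => P) (Measure.pi fun _ : Fin n => Q)
        = (1 + chiSq P Q) ^ n - 1 ∧
      (chiSq P Q ≤ (n : ℝ≥0∞)⁻¹ →
        chiSq (Measure.pi fun _ : Fin n => P) (Measure.pi fun _ : Fin n => Q)
          ≤ ENNReal.ofReal (Real.exp 1 - 1)) := by
  have hmain : chiSq (Measure.pi fun _ : Fin n => P) (Measure.pi fun _ : Fin n => Q)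
      = (1 + chiSq P Q) ^ n - 1 := by
    by_cases hPQ : P ≪ Q
    · -- absolutely continuous case
      set f := P.rnDeriv Q with hfdef
      have hfm : Measurable f := Measure.measurable_rnDeriv P Q
      set I := ∫⁻ x, f x ^ 2 ∂Q with hI
      -- ∫ f dQ = 1
      have hint : ∫⁻ x, f x ∂Q = 1 := by
        rw [Measure.lintegral_rnDeriv hPQ, measure_univ]
      -- 1 ≤ I  (Cauchy–Schwarz)
      have hIone : 1 ≤ I := by
        have hcs := ENNReal.lintegral_mul_le_Lp_mul_Lq Q
            (Real.HolderConjugate.two_two : Real.HolderConjugate 2 2) hfm.aemeasurable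
            (aemeasurable_const (b := (1 : ℝ≥0∞)))
        simp only [Pi.mul_apply, mul_one] at hcs
        rw [hint] at hcs
        have h1 : (∫⁻ x, (1 : ℝ≥0∞) ^ (2 : ℝ) ∂Q) = 1 := by simp
        rw [h1, ENNReal.one_rpow, mul_one] at hcs
        have : (1 : ℝ≥0∞) ≤ ((∫⁻ a, f a ^ (2 : ℝ) ∂Q) ^ ((2 : ℝ)⁻¹)) := by
          simpa [one_div] using hcs
        have h2 : (1 : ℝ≥0∞) ≤ ∫⁻ a, f a ^ (2 : ℝ) ∂Q := by
          have := ENNReal.rpow_le_rpow this (by norm_num : (0:ℝ) ≤ 2)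
          rwa [ENNReal.one_rpow, ← ENNReal.rpow_mul, inv_mul_cancel₀ (by norm_num : (2:ℝ) ≠ 0),
            ENNReal.rpow_one] at this
        have h3 : (∫⁻ a, f a ^ (2 : ℝ) ∂Q) = I := by
          rw [hI]
          refine lintegral_congr fun a => ?_
          rw [← ENNReal.rpow_natCast (f a) 2]
          norm_num
        rwa [h3] at h2
      have hpiac : (Measure.pi fun _ : Fin n => P) ≪ (Measure.pi fun _ : Fin n => Q) := by
        rw [pi_eq_withDensity P Q hPQ n]
        exact withDensity_absolutelyContinuous _ _
      -- rnDeriv of the product measures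
      have hg : Measurable fun x : Fin n → Ω => ∏ i, f (x i) :=
        Finset.measurable_prod _ fun i _ => hfm.comp (measurable_pi_apply i)
      have hrn : (Measure.pi fun _ : Fin n => P).rnDeriv (Measure.pi fun _ : Fin n => Q)
          =ᵐ[Measure.pi fun _ : Fin n => Q] fun x => ∏ i, f (x i) := by
        rw [pi_eq_withDensity P Q hPQ n]
        exact Measure.rnDeriv_withDensity _ hg
      have hsq : ∫⁻ x, ((Measure.pi fun _ : Fin n => P).rnDeriv
            (Measure.pi fun _ : Fin n => Q) x) ^ 2 ∂(Measure.pi fun _ : Fin n => Q)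
          = I ^ n := by
        have hae : (fun x => ((Measure.pi fun _ : Fin n => P).rnDeriv
            (Measure.pi fun _ : Fin n => Q) x) ^ 2)
            =ᵐ[Measure.pi fun _ : Fin n => Q] fun x => (∏ i, f (x i)) ^ 2 := by
          filter_upwards [hrn] with x hx
          simp only [hx]
        rw [lintegral_congr_ae hae]
        have hps : (fun x : Fin n → Ω => (∏ i, f (x i)) ^ 2)
            = fun x => ∏ i, (fun y => f y ^ 2) (x i) := by
          funext x
          rw [← Finset.prod_pow]
        rw [hps, lintegral_pi_prod Q n _ fun i => hfm.pow_const 2]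
        simp [hI, Finset.prod_const, Finset.card_univ]
      have hchi : chiSq P Q = I - 1 := by rw [chiSq, if_pos hPQ]
      have hone_add : 1 + chiSq P Q = I := by
        rw [hchi, add_tsub_cancel_of_le hIone]
      rw [chiSq, if_pos hpiac, hsq, hone_add]
    · -- not absolutely continuous: both sides are ⊤
      have hpinac : ¬ (Measure.pi fun _ : Fin n => P) ≪ (Measure.pi fun _ : Fin n => Q) := by
        intro hac
        apply hPQ
        intro s hs
        set t := toMeasurable Q s with ht
        have htm : MeasurableSet t := measurableSet_toMeasurable Q s
        have hQt : Q t = 0 := by rwa [measure_toMeasurable]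
        set S : Fin n → Set Ω := fun i => if i = ⟨0, hn⟩ then t else Set.univ with hS
        have hQpi : (Measure.pi fun _ : Fin n => Q) (Set.pi Set.univ S) = 0 := by
          rw [Measure.pi_pi]
          refine Finset.prod_eq_zero (Finset.mem_univ ⟨0, hn⟩) ?_
          simp [hS, hQt]
        have hPpi := hac hQpi
        rw [Measure.pi_pi] at hPpi
        have : P t = 0 := by
          by_contra hne
          apply hne
          have := Finset.prod_eq_zero_iff.mp hPpi
          obtain ⟨i, -, hi⟩ := this
          by_cases hieq : i = ⟨0, hn⟩
          · rw [hieq] at hi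
            simpa [hS] using hi
          · simp [hS, hieq, measure_univ] at hi
        exact measure_mono_null (subset_toMeasurable Q s) this
      have hchiP : chiSq P Q = ⊤ := by rw [chiSq, if_neg hPQ]
      have hchipi : chiSq (Measure.pi fun _ : Fin n => P) (Measure.pi fun _ : Fin n => Q) = ⊤ := by
        rw [chiSq, if_neg hpinac]
      rw [hchiP, hchipi]
      rw [add_top, ENNReal.top_pow (by omega : n ≠ 0)]
      simp
  refine ⟨hmain, fun hle => ?_⟩
  rw [hmain]
  have hnR : (0 : ℝ) < n := by positivity
  have hbound : 1 + chiSq P Q ≤ ENNReal.ofReal (Real.exp (1 / n)) := by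
    have h1 : (1 : ℝ≥0∞) + chiSq P Q ≤ 1 + (n : ℝ≥0∞)⁻¹ := add_le_add_right hle 1
    refine h1.trans ?_
    have h2 : (n : ℝ≥0∞)⁻¹ = ENNReal.ofReal (1 / n) := by
      rw [← ENNReal.ofReal_natCast n, ← ENNReal.ofReal_inv_of_pos hnR, one_div]
    rw [h2, ← ENNReal.ofReal_one, ← ENNReal.ofReal_add (by norm_num) (by positivity)]
    apply ENNReal.ofReal_le_ofReal
    have := Real.add_one_le_exp (1 / n : ℝ)
    linarith
  calc (1 + chiSq P Q) ^ n - 1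
      ≤ (ENNReal.ofReal (Real.exp (1 / n))) ^ n - 1 :=
        tsub_le_tsub_right (pow_le_pow_left' hbound n) 1
    _ = ENNReal.ofReal (Real.exp 1) - 1 := by
        rw [← ENNReal.ofReal_pow (Real.exp_pos _).le, ← Real.exp_nat_mul]
        congr 2
        field_simp
    _ = ENNReal.ofReal (Real.exp 1 - 1) := by
        rw [ENNReal.ofReal_sub _ (by norm_num), ENNReal.ofReal_one]
end

section
/- With T affine on a convex set Π and δ_{H²}(t) = sup{T(π') - T(π) : H²(π'P, πP) ≤ t², π, π' ∈ Π}, the function t ↦ δ_{H²}(t) satisfies δ_{H²}(ct) ≥ c·δ_{H²}(t) for all c ∈ [0,1], and moreover δ_{H²}(t) ≥ Δ_max · t/√2 for all t ∈ [0, √2], where Δ_max = sup{T(π') - T(π) : π, π' ∈ Π}. -/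
open MeasureTheory
open scoped NNReal ENNReal

lemma sqHellinger_self' {Ω : Type*} [MeasurableSpace Ω] (Q : Measure Ω) :
    sqHellinger Q Q = 0 := by
  simp [sqHellinger]

lemma pointwise_key {c x y : ℝ} (hc0 : 0 ≤ c) (hc1 : c ≤ 1) (hx : 0 ≤ x) (hy : 0 ≤ y) :
    (Real.sqrt ((1+c)/2 * x + (1-c)/2 * y) - Real.sqrt ((1-c)/2 * x + (1+c)/2 * y)) ^ 2
      ≤ c ^ 2 * (Real.sqrt x - Real.sqrt y) ^ 2 := by
  have hp0 : 0 ≤ Real.sqrt x := Real.sqrt_nonneg x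
  have hq0 : 0 ≤ Real.sqrt y := Real.sqrt_nonneg y
  set p := Real.sqrt x with hp
  set q := Real.sqrt y with hq
  have hp2 : p ^ 2 = x := Real.sq_sqrt hx
  have hq2 : q ^ 2 = y := Real.sq_sqrt hy
  have h1 : (0:ℝ) ≤ (1+c)/2 * x + (1-c)/2 * y := by nlinarith
  have h2 : (0:ℝ) ≤ (1-c)/2 * x + (1+c)/2 * y := by nlinarith
  set A := Real.sqrt ((1+c)/2 * x + (1-c)/2 * y) with hA
  set B := Real.sqrt ((1-c)/2 * x + (1+c)/2 * y) with hB
  have hA0 : 0 ≤ A := Real.sqrt_nonneg _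
  have hB0 : 0 ≤ B := Real.sqrt_nonneg _
  have hA2 : A ^ 2 = (1+c)/2 * x + (1-c)/2 * y := Real.sq_sqrt h1
  have hB2 : B ^ 2 = (1-c)/2 * x + (1+c)/2 * y := Real.sq_sqrt h2
  have hpq2 : (p*q)^2 = x * y := by rw [mul_pow, hp2, hq2]
  have hprod : (0:ℝ) ≤ 1 - c^2 := by nlinarith
  have hR0 : 0 ≤ (1 - c^2) * ((x+y)/2) + c^2 * (p*q) :=
    add_nonneg (mul_nonneg hprod (by linarith)) (mul_nonneg (sq_nonneg c) (mul_nonneg hp0 hq0))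
  have hABsq : ((1 - c^2) * ((x+y)/2) + c^2 * (p*q))^2
      ≤ ((1+c)/2 * x + (1-c)/2 * y) * ((1-c)/2 * x + (1+c)/2 * y) := by
    nlinarith [mul_nonneg (mul_nonneg (sq_nonneg c) hprod) (sq_nonneg ((x+y)/2 - p*q)), hpq2]
  have hAB : (1 - c^2) * ((x+y)/2) + c^2 * (p*q) ≤ A * B := by
    have : A * B = Real.sqrt (((1+c)/2 * x + (1-c)/2 * y) * ((1-c)/2 * x + (1+c)/2 * y)) :=
      (Real.sqrt_mul h1 _).symm
    rw [this]
    exact (Real.le_sqrt hR0 (mul_nonneg h1 h2)).mpr hABsq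
  nlinarith [hAB, hA2, hB2, hp2, hq2]

lemma rnDeriv_facts {𝒳 : Type*} [MeasurableSpace 𝒳] (A B : Measure 𝒳)
    [IsFiniteMeasure A] [IsFiniteMeasure B] :
    ∀ᵐ x ∂(A + B), A.rnDeriv (A+B) x + B.rnDeriv (A+B) x = 1 := by
  have h1 := Measure.rnDeriv_add A B (A+B)
  have h2 := Measure.rnDeriv_self (A+B)
  filter_upwards [h1, h2] with x hx1 hx2
  rw [← Pi.add_apply (A.rnDeriv (A+B)) (B.rnDeriv (A+B)), ← hx1, hx2]

lemma sqHellinger_le_two' {𝒳 : Type*} [MeasurableSpace 𝒳] (A B : Measure 𝒳)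
    [IsProbabilityMeasure A] [IsProbabilityMeasure B] : sqHellinger A B ≤ 2 := by
  have hmeas : Measurable fun x => (Real.sqrt ((A.rnDeriv (A + B)) x).toReal
      - Real.sqrt ((B.rnDeriv (A + B)) x).toReal) ^ 2 :=
    (((Measure.measurable_rnDeriv A (A+B)).ennreal_toReal.sqrt.sub
      (Measure.measurable_rnDeriv B (A+B)).ennreal_toReal.sqrt).pow_const 2)
  have hae : ∀ᵐ x ∂(A+B), (Real.sqrt ((A.rnDeriv (A + B)) x).toReal
      - Real.sqrt ((B.rnDeriv (A + B)) x).toReal) ^ 2 ≤ 1 := by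
    filter_upwards [rnDeriv_facts A B] with x hx
    have hfin : A.rnDeriv (A+B) x ≠ ∞ := by
      intro h; rw [h] at hx; simp at hx
    have hgin : B.rnDeriv (A+B) x ≠ ∞ := by
      intro h; rw [h, add_top] at hx; simp at hx
    have hsum : ((A.rnDeriv (A+B)) x).toReal + ((B.rnDeriv (A+B)) x).toReal = 1 := by
      rw [← ENNReal.toReal_add hfin hgin, hx]; simp
    set F := ((A.rnDeriv (A+B)) x).toReal
    set G := ((B.rnDeriv (A+B)) x).toReal
    have hF0 : 0 ≤ F := ENNReal.toReal_nonneg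
    have hG0 : 0 ≤ G := ENNReal.toReal_nonneg
    nlinarith [Real.sq_sqrt hF0, Real.sq_sqrt hG0,
      mul_nonneg (Real.sqrt_nonneg F) (Real.sqrt_nonneg G)]
  have hint : Integrable (fun x => (Real.sqrt ((A.rnDeriv (A + B)) x).toReal
      - Real.sqrt ((B.rnDeriv (A + B)) x).toReal) ^ 2) (A+B) := by
    refine Integrable.mono' (integrable_const (1:ℝ)) hmeas.aestronglyMeasurable ?_
    filter_upwards [hae] with x hx
    rw [Real.norm_eq_abs, abs_of_nonneg (sq_nonneg _)]
    exact hx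
  calc sqHellinger A B ≤ ∫ _x, (1:ℝ) ∂(A+B) := integral_mono_ae hint (integrable_const 1) hae
  _ = 2 := by
    simp [integral_const, Measure.add_apply, measure_univ]
    rw [measureReal_def, Measure.add_apply, measure_univ, measure_univ]; norm_num

lemma sqHellinger_mix_le {𝒳 : Type*} [MeasurableSpace 𝒳] (A B : Measure 𝒳)
    [IsFiniteMeasure A] [IsFiniteMeasure B] {c : ℝ} (hc0 : 0 ≤ c) (hc1 : c ≤ 1) :
    sqHellinger ((((1+c)/2).toNNReal : ℝ≥0∞) • A + (((1-c)/2).toNNReal : ℝ≥0∞) • B)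
        ((((1-c)/2).toNNReal : ℝ≥0∞) • A + (((1+c)/2).toNNReal : ℝ≥0∞) • B)
      ≤ c ^ 2 * sqHellinger A B := by
  have hs0 : (0:ℝ) ≤ (1+c)/2 := by linarith
  have hu0 : (0:ℝ) ≤ (1-c)/2 := by linarith
  have hsR : ((((1+c)/2).toNNReal : ℝ≥0) : ℝ) = (1+c)/2 := Real.coe_toNNReal _ hs0
  have huR : ((((1-c)/2).toNNReal : ℝ≥0) : ℝ) = (1-c)/2 := Real.coe_toNNReal _ hu0
  have hsum : ((1+c)/2).toNNReal + ((1-c)/2).toNNReal = 1 := by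
    ext; push_cast [hsR, huR]; ring
  set sN : ℝ≥0 := ((1+c)/2).toNNReal with hsNdef
  set uN : ℝ≥0 := ((1-c)/2).toNNReal with huNdef
  haveI hfinA : IsFiniteMeasure ((sN : ℝ≥0∞) • A) := by
    constructor
    rw [Measure.smul_apply, smul_eq_mul]
    exact ENNReal.mul_lt_top ENNReal.coe_lt_top (measure_lt_top A _)
  haveI hfinB : IsFiniteMeasure ((uN : ℝ≥0∞) • B) := by
    constructor
    rw [Measure.smul_apply, smul_eq_mul]
    exact ENNReal.mul_lt_top ENNReal.coe_lt_top (measure_lt_top B _)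
  haveI hfinA' : IsFiniteMeasure ((uN : ℝ≥0∞) • A) := by
    constructor
    rw [Measure.smul_apply, smul_eq_mul]
    exact ENNReal.mul_lt_top ENNReal.coe_lt_top (measure_lt_top A _)
  haveI hfinB' : IsFiniteMeasure ((sN : ℝ≥0∞) • B) := by
    constructor
    rw [Measure.smul_apply, smul_eq_mul]
    exact ENNReal.mul_lt_top ENNReal.coe_lt_top (measure_lt_top B _)
  have hνeq : ((sN : ℝ≥0∞) • A + (uN : ℝ≥0∞) • B) + ((uN : ℝ≥0∞) • A + (sN : ℝ≥0∞) • B)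
      = A + B := by
    rw [add_add_add_comm, ← add_smul, ← add_smul, ← ENNReal.coe_add, ← ENNReal.coe_add,
      hsum, add_comm uN sN, hsum, ENNReal.coe_one, one_smul, one_smul]
  -- a.e. identification of densities
  have hQsD : ((sN : ℝ≥0∞) • A + (uN : ℝ≥0∞) • B).rnDeriv (A+B)
      =ᵐ[A+B] fun x => (sN : ℝ≥0∞) * A.rnDeriv (A+B) x + (uN : ℝ≥0∞) * B.rnDeriv (A+B) x := by
    filter_upwards [Measure.rnDeriv_add ((sN : ℝ≥0∞) • A) ((uN : ℝ≥0∞) • B) (A+B),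
      Measure.rnDeriv_smul_left_of_ne_top A (A+B) (ENNReal.coe_ne_top (r := sN)),
      Measure.rnDeriv_smul_left_of_ne_top B (A+B) (ENNReal.coe_ne_top (r := uN))]
      with x h1 h2 h3
    rw [h1, Pi.add_apply, h2, h3, Pi.smul_apply, Pi.smul_apply, smul_eq_mul, smul_eq_mul]
  have hQuD : ((uN : ℝ≥0∞) • A + (sN : ℝ≥0∞) • B).rnDeriv (A+B)
      =ᵐ[A+B] fun x => (uN : ℝ≥0∞) * A.rnDeriv (A+B) x + (sN : ℝ≥0∞) * B.rnDeriv (A+B) x := by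
    filter_upwards [Measure.rnDeriv_add ((uN : ℝ≥0∞) • A) ((sN : ℝ≥0∞) • B) (A+B),
      Measure.rnDeriv_smul_left_of_ne_top A (A+B) (ENNReal.coe_ne_top (r := uN)),
      Measure.rnDeriv_smul_left_of_ne_top B (A+B) (ENNReal.coe_ne_top (r := sN))]
      with x h1 h2 h3
    rw [h1, Pi.add_apply, h2, h3, Pi.smul_apply, Pi.smul_apply, smul_eq_mul, smul_eq_mul]
  -- main a.e. bound
  have hmain : ∀ᵐ x ∂(A+B),
      (Real.sqrt ((((sN : ℝ≥0∞) • A + (uN : ℝ≥0∞) • B).rnDeriv (A+B)) x).toReal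
        - Real.sqrt ((((uN : ℝ≥0∞) • A + (sN : ℝ≥0∞) • B).rnDeriv (A+B)) x).toReal) ^ 2
        ≤ c ^ 2 * (Real.sqrt ((A.rnDeriv (A+B)) x).toReal
            - Real.sqrt ((B.rnDeriv (A+B)) x).toReal) ^ 2
      ∧ c ^ 2 * (Real.sqrt ((A.rnDeriv (A+B)) x).toReal
            - Real.sqrt ((B.rnDeriv (A+B)) x).toReal) ^ 2 ≤ 1 := by
    filter_upwards [hQsD, hQuD, rnDeriv_facts A B] with x h1 h2 h3
    have hfin : A.rnDeriv (A+B) x ≠ ∞ := by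
      intro h; rw [h] at h3; simp at h3
    have hgin : B.rnDeriv (A+B) x ≠ ∞ := by
      intro h; rw [h, add_top] at h3; simp at h3
    set F := ((A.rnDeriv (A+B)) x).toReal with hF
    set G := ((B.rnDeriv (A+B)) x).toReal with hG
    have hF0 : 0 ≤ F := ENNReal.toReal_nonneg
    have hG0 : 0 ≤ G := ENNReal.toReal_nonneg
    have hsumFG : F + G = 1 := by
      rw [hF, hG, ← ENNReal.toReal_add hfin hgin, h3]; simp
    have hs' : (((sN : ℝ≥0∞) • A + (uN : ℝ≥0∞) • B).rnDeriv (A+B) x).toReal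
        = (1+c)/2 * F + (1-c)/2 * G := by
      rw [h1, ENNReal.toReal_add (ENNReal.mul_ne_top ENNReal.coe_ne_top hfin)
        (ENNReal.mul_ne_top ENNReal.coe_ne_top hgin), ENNReal.toReal_mul, ENNReal.toReal_mul]
      simp [hsR, huR, hF, hG]
    have hu' : (((uN : ℝ≥0∞) • A + (sN : ℝ≥0∞) • B).rnDeriv (A+B) x).toReal
        = (1-c)/2 * F + (1+c)/2 * G := by
      rw [h2, ENNReal.toReal_add (ENNReal.mul_ne_top ENNReal.coe_ne_top hfin)
        (ENNReal.mul_ne_top ENNReal.coe_ne_top hgin), ENNReal.toReal_mul, ENNReal.toReal_mul]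
      simp [hsR, huR, hF, hG]
    constructor
    · rw [hs', hu']
      exact pointwise_key hc0 hc1 hF0 hG0
    · have h4 : Real.sqrt F ≤ 1 := by
        rw [show (1:ℝ) = Real.sqrt 1 from (Real.sqrt_one).symm]
        exact Real.sqrt_le_sqrt (by linarith)
      have h5 : Real.sqrt G ≤ 1 := by
        rw [show (1:ℝ) = Real.sqrt 1 from (Real.sqrt_one).symm]
        exact Real.sqrt_le_sqrt (by linarith)
      have h6 : (Real.sqrt F - Real.sqrt G) ^ 2 ≤ 1 := by
        nlinarith [Real.sq_sqrt hF0, Real.sq_sqrt hG0,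
          mul_nonneg (Real.sqrt_nonneg F) (Real.sqrt_nonneg G)]
      have h7 : c ^ 2 ≤ 1 := by nlinarith
      calc c ^ 2 * (Real.sqrt F - Real.sqrt G) ^ 2 ≤ 1 * 1 :=
        mul_le_mul h7 h6 (sq_nonneg _) zero_le_one
      _ = 1 := one_mul 1
  -- measurability and integrability
  have hmeasS : Measurable fun x =>
      (Real.sqrt ((((sN : ℝ≥0∞) • A + (uN : ℝ≥0∞) • B).rnDeriv (A+B)) x).toReal
        - Real.sqrt ((((uN : ℝ≥0∞) • A + (sN : ℝ≥0∞) • B).rnDeriv (A+B)) x).toReal) ^ 2 :=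
    ((Measure.measurable_rnDeriv _ _).ennreal_toReal.sqrt.sub
      (Measure.measurable_rnDeriv _ _).ennreal_toReal.sqrt).pow_const 2
  have hmeasR : Measurable fun x => c ^ 2 * (Real.sqrt ((A.rnDeriv (A+B)) x).toReal
      - Real.sqrt ((B.rnDeriv (A+B)) x).toReal) ^ 2 :=
    (((Measure.measurable_rnDeriv _ _).ennreal_toReal.sqrt.sub
      (Measure.measurable_rnDeriv _ _).ennreal_toReal.sqrt).pow_const 2).const_mul _
  have hintR : Integrable (fun x => c ^ 2 * (Real.sqrt ((A.rnDeriv (A+B)) x).toReal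
      - Real.sqrt ((B.rnDeriv (A+B)) x).toReal) ^ 2) (A+B) := by
    refine Integrable.mono' (integrable_const (1:ℝ)) hmeasR.aestronglyMeasurable ?_
    filter_upwards [hmain] with x hx
    rw [Real.norm_eq_abs, abs_of_nonneg (mul_nonneg (sq_nonneg c) (sq_nonneg _))]
    exact hx.2
  have hintS : Integrable (fun x =>
      (Real.sqrt ((((sN : ℝ≥0∞) • A + (uN : ℝ≥0∞) • B).rnDeriv (A+B)) x).toReal
        - Real.sqrt ((((uN : ℝ≥0∞) • A + (sN : ℝ≥0∞) • B).rnDeriv (A+B)) x).toReal) ^ 2) (A+B) := by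
    refine Integrable.mono' (integrable_const (1:ℝ)) hmeasS.aestronglyMeasurable ?_
    filter_upwards [hmain] with x hx
    rw [Real.norm_eq_abs, abs_of_nonneg (sq_nonneg _)]
    exact hx.1.trans hx.2
  -- conclude
  simp only [sqHellinger]
  rw [hνeq]
  calc ∫ x, (Real.sqrt ((((sN : ℝ≥0∞) • A + (uN : ℝ≥0∞) • B).rnDeriv (A+B)) x).toReal
        - Real.sqrt ((((uN : ℝ≥0∞) • A + (sN : ℝ≥0∞) • B).rnDeriv (A+B)) x).toReal) ^ 2 ∂(A+B)
      ≤ ∫ x, c ^ 2 * (Real.sqrt ((A.rnDeriv (A+B)) x).toReal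
        - Real.sqrt ((B.rnDeriv (A+B)) x).toReal) ^ 2 ∂(A+B) :=
    integral_mono_ae hintS hintR (hmain.mono fun x hx => hx.1)
  _ = c ^ 2 * ∫ x, (Real.sqrt ((A.rnDeriv (A+B)) x).toReal
        - Real.sqrt ((B.rnDeriv (A+B)) x).toReal) ^ 2 ∂(A+B) := integral_const_mul _ _

lemma bind_comb' {Θ 𝒳 : Type*} [MeasurableSpace Θ] [MeasurableSpace 𝒳] (P : Θ → Measure 𝒳)
    (hPm : Measurable P) (a b : ℝ≥0∞) (π π' : Measure Θ) :
    ((a • π + b • π').bind P : Measure 𝒳) = a • π.bind P + b • π'.bind P := by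
  ext s hs
  rw [Measure.bind_apply hs hPm.aemeasurable, Measure.add_apply, Measure.smul_apply, Measure.smul_apply,
    Measure.bind_apply hs hPm.aemeasurable, Measure.bind_apply hs hPm.aemeasurable, lintegral_add_measure,
    lintegral_smul_measure, lintegral_smul_measure, smul_eq_mul, smul_eq_mul]

lemma bind_prob' {Θ 𝒳 : Type*} [MeasurableSpace Θ] [MeasurableSpace 𝒳] (P : Θ → Measure 𝒳)
    (hPm : Measurable P) (hPp : ∀ θ, IsProbabilityMeasure (P θ)) (π : Measure Θ)
    (hπ : IsProbabilityMeasure π) : IsProbabilityMeasure (π.bind P) := by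
  constructor
  rw [Measure.bind_apply MeasurableSet.univ hPm.aemeasurable]
  have h1 : ∀ θ, P θ Set.univ = 1 := fun θ => (hPp θ).measure_univ
  simp only [h1, lintegral_one]
  exact hπ.measure_univ


/-- Subadditivity and superlinearity of the Hellinger modulus of continuity
`δ_{H²}(t) = sup{T(π') - T(π) : H²(π'P, πP) ≤ t², π, π' ∈ Π}`:
`δ_{H²}(ct) ≥ c·δ_{H²}(t)` for `c ∈ [0,1]`, and `δ_{H²}(t) ≥ Δ_max · t/√2` on `[0,√2]`. -/
theorem deltaH_subadditive_superlinear
    {Θ 𝒳 : Type*} [MeasurableSpace Θ] [MeasurableSpace 𝒳]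
    (P : Θ → Measure 𝒳) (hPm : Measurable P) (hPp : ∀ θ, IsProbabilityMeasure (P θ))
    (Prior : Set (Measure Θ)) (hprob : ∀ π ∈ Prior, IsProbabilityMeasure π)
    (hconv : ∀ π ∈ Prior, ∀ π' ∈ Prior, ∀ a b : ℝ≥0, a + b = 1 →
      (a : ℝ≥0∞) • π + (b : ℝ≥0∞) • π' ∈ Prior)
    (T : Measure Θ → ℝ)
    (haff : ∀ π ∈ Prior, ∀ π' ∈ Prior, ∀ a b : ℝ≥0, a + b = 1 →
      T ((a : ℝ≥0∞) • π + (b : ℝ≥0∞) • π') = (a : ℝ) * T π + (b : ℝ) * T π')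
    (δ : ℝ → ℝ)
    (hδ : ∀ t : ℝ, δ t = sSup {x : ℝ | ∃ π ∈ Prior, ∃ π' ∈ Prior,
      sqHellinger (π'.bind P) (π.bind P) ≤ t ^ 2 ∧ x = T π' - T π})
    (Δmax : ℝ)
    (hΔ : Δmax = sSup {x : ℝ | ∃ π ∈ Prior, ∃ π' ∈ Prior, x = T π' - T π}) :
    (∀ c ∈ Set.Icc (0 : ℝ) 1, ∀ t : ℝ, 0 ≤ t → c * δ t ≤ δ (c * t)) ∧
      ∀ t ∈ Set.Icc (0 : ℝ) (Real.sqrt 2), Δmax * t / Real.sqrt 2 ≤ δ t := by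
  set S : ℝ → Set ℝ := fun t => {x : ℝ | ∃ π ∈ Prior, ∃ π' ∈ Prior,
      sqHellinger (π'.bind P) (π.bind P) ≤ t ^ 2 ∧ x = T π' - T π} with hSdef
  have hδ' : ∀ t, δ t = sSup (S t) := hδ
  have hmono : ∀ {t1 t2 : ℝ}, t1 ^ 2 ≤ t2 ^ 2 → S t1 ⊆ S t2 := by
    rintro t1 t2 h x ⟨π, hπ, π', hπ', hH, hx⟩
    exact ⟨π, hπ, π', hπ', hH.trans h, hx⟩
  have hzero : Prior.Nonempty → ∀ r : ℝ, (0:ℝ) ∈ S r := by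
    rintro ⟨π₀, hπ₀⟩ r
    exact ⟨π₀, hπ₀, π₀, hπ₀, by rw [sqHellinger_self']; exact sq_nonneg r, by ring⟩
  have hnonneg : Prior.Nonempty → ∀ r : ℝ, 0 ≤ δ r := by
    intro hne r
    rw [hδ']
    by_cases hb : BddAbove (S r)
    · exact le_csSup hb (hzero hne r)
    · rw [Real.sSup_of_not_bddAbove hb]
  have hkey : ∀ c : ℝ, 0 ≤ c → c ≤ 1 → ∀ t x, x ∈ S t → c * x ∈ S (c * t) := by
    rintro c hc0 hc1 t x ⟨π, hπ, π', hπ', hH, hx⟩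
    have hs0 : (0:ℝ) ≤ (1+c)/2 := by linarith
    have hu0 : (0:ℝ) ≤ (1-c)/2 := by linarith
    have hsR : ((((1+c)/2).toNNReal : ℝ≥0) : ℝ) = (1+c)/2 := Real.coe_toNNReal _ hs0
    have huR : ((((1-c)/2).toNNReal : ℝ≥0) : ℝ) = (1-c)/2 := Real.coe_toNNReal _ hu0
    have hsum : ((1+c)/2).toNNReal + ((1-c)/2).toNNReal = 1 := by
      ext; push_cast [hsR, huR]; ring
    have hsum' : ((1-c)/2).toNNReal + ((1+c)/2).toNNReal = 1 := by
      rw [add_comm]; exact hsum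
    haveI hp1 : IsProbabilityMeasure (π.bind P) := bind_prob' P hPm hPp π (hprob π hπ)
    haveI hp2 : IsProbabilityMeasure (π'.bind P) := bind_prob' P hPm hPp π' (hprob π' hπ')
    refine ⟨(((1-c)/2).toNNReal : ℝ≥0∞) • π' + (((1+c)/2).toNNReal : ℝ≥0∞) • π,
        hconv π' hπ' π hπ _ _ hsum',
        (((1+c)/2).toNNReal : ℝ≥0∞) • π' + (((1-c)/2).toNNReal : ℝ≥0∞) • π,
        hconv π' hπ' π hπ _ _ hsum, ?_, ?_⟩
    · rw [bind_comb' P hPm, bind_comb' P hPm]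
      calc sqHellinger
            ((((1+c)/2).toNNReal : ℝ≥0∞) • π'.bind P + (((1-c)/2).toNNReal : ℝ≥0∞) • π.bind P)
            ((((1-c)/2).toNNReal : ℝ≥0∞) • π'.bind P + (((1+c)/2).toNNReal : ℝ≥0∞) • π.bind P)
          ≤ c ^ 2 * sqHellinger (π'.bind P) (π.bind P) :=
        sqHellinger_mix_le (π'.bind P) (π.bind P) hc0 hc1
      _ ≤ c ^ 2 * t ^ 2 := mul_le_mul_of_nonneg_left hH (sq_nonneg c)
      _ = (c * t) ^ 2 := (mul_pow c t 2).symm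
    · rw [haff π' hπ' π hπ _ _ hsum, haff π' hπ' π hπ _ _ hsum', hsR, huR, hx]
      ring
  have part1 : ∀ c ∈ Set.Icc (0:ℝ) 1, ∀ t : ℝ, 0 ≤ t → c * δ t ≤ δ (c * t) := by
    rintro c ⟨hc0, hc1⟩ t ht
    rcases Prior.eq_empty_or_nonempty with hP | hP
    · have hempty : ∀ r : ℝ, S r = ∅ := by
        intro r; ext x; simp [hSdef, hP]
      rw [hδ' t, hδ' (c*t), hempty, hempty, Real.sSup_empty]
      simp
    · by_cases hb : BddAbove (S t)
      · have hc2 : c ^ 2 ≤ 1 := by nlinarith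
        have hsub : S (c*t) ⊆ S t := hmono (by
          rw [mul_pow]
          nlinarith [mul_le_mul_of_nonneg_right hc2 (sq_nonneg t)])
        have hb' : BddAbove (S (c*t)) := hb.mono hsub
        have hle : ∀ x ∈ S t, c * x ≤ δ (c*t) := by
          intro x hx
          rw [hδ']
          exact le_csSup hb' (hkey c hc0 hc1 t x hx)
        rcases eq_or_lt_of_le hc0 with hc | hc
        · rw [← hc]
          simpa using hnonneg hP (0 * t)
        · have h1 : δ t ≤ δ (c*t) / c := by
            rw [hδ']
            refine csSup_le ⟨0, hzero hP t⟩ fun x hx => ?_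
            rw [le_div_iff₀ hc, mul_comm]
            exact hle x hx
          calc c * δ t ≤ c * (δ (c*t)/c) := mul_le_mul_of_nonneg_left h1 hc0
          _ = δ (c*t) := by field_simp
      · rw [hδ' t, Real.sSup_of_not_bddAbove hb]
        simpa using hnonneg hP (c*t)
  refine ⟨part1, ?_⟩
  have hsqrt2 : (0:ℝ) < Real.sqrt 2 := Real.sqrt_pos.mpr (by norm_num)
  rintro t ⟨ht0, ht2⟩
  have hsets : {x : ℝ | ∃ π ∈ Prior, ∃ π' ∈ Prior, x = T π' - T π} = S (Real.sqrt 2) := by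
    ext x
    simp only [hSdef, Set.mem_setOf_eq]
    constructor
    · rintro ⟨π, hπ, π', hπ', hx⟩
      refine ⟨π, hπ, π', hπ', ?_, hx⟩
      rw [Real.sq_sqrt (by norm_num : (0:ℝ) ≤ 2)]
      haveI hp1 : IsProbabilityMeasure (π.bind P) := bind_prob' P hPm hPp π (hprob π hπ)
      haveI hp2 : IsProbabilityMeasure (π'.bind P) := bind_prob' P hPm hPp π' (hprob π' hπ')
      exact sqHellinger_le_two' _ _
    · rintro ⟨π, hπ, π', hπ', _, hx⟩
      exact ⟨π, hπ, π', hπ', hx⟩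
  have hΔeq : Δmax = δ (Real.sqrt 2) := by
    rw [hΔ, hsets, ← hδ']
  have hc : t / Real.sqrt 2 ∈ Set.Icc (0:ℝ) 1 :=
    ⟨div_nonneg ht0 hsqrt2.le, (div_le_one hsqrt2).mpr ht2⟩
  have h := part1 _ hc (Real.sqrt 2) hsqrt2.le
  rw [div_mul_cancel₀ t hsqrt2.ne'] at h
  calc Δmax * t / Real.sqrt 2 = t / Real.sqrt 2 * δ (Real.sqrt 2) := by rw [hΔeq]; ring
  _ ≤ δ t := h
end

section
/- For the Poisson kernel P(·|θ) = Poi(θ) and s, t > 0, define δ(s,t) as the supremum of ∫ e^{-sθ} Δ(dθ) over finite signed measures Δ on ℝ₊ satisfying ‖ΔP‖_TV ≤ t and ‖Δ‖_TV ≤ 1, where ΔP is the signed measure on ℤ₊ with (ΔP)(m) = ∫ e^{-θ}θ^m/m! Δ(dθ). Then for every s > 0 and 0 ≤ t ≤ 1, δ(s,t) ≤ t^{min(1, 2/s)}. -/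
open MeasureTheory

/-- Integral of a function against a finite signed measure, via the Jordan decomposition. -/
noncomputable def sIntegral (Δ : SignedMeasure ℝ) (f : ℝ → ℝ) : ℝ :=
  (∫ x, f x ∂Δ.toJordanDecomposition.posPart) - ∫ x, f x ∂Δ.toJordanDecomposition.negPart

/-- The `m`-th coefficient of the Poisson mixture `ΔP`:
`(ΔP)(m) = ∫ e^{-θ} θ^m/m! Δ(dθ)`. -/
noncomputable def poissonMixCoef (Δ : SignedMeasure ℝ) (m : ℕ) : ℝ :=
  sIntegral Δ fun θ => Real.exp (-θ) * θ ^ m / (m.factorial : ℝ)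

/-- `δ(s,t)`: supremum of `∫ e^{-sθ} Δ(dθ)` over finite signed measures `Δ` on `ℝ₊` with
`‖ΔP‖_TV ≤ t` and `‖Δ‖_TV ≤ 1`, where `P` is the Poisson kernel. -/
noncomputable def deltaPoisson (s t : ℝ) : ℝ :=
  sSup {x : ℝ | ∃ Δ : SignedMeasure ℝ,
    Δ.totalVariation (Set.Iio (0 : ℝ)) = 0 ∧
    (∑' m : ℕ, |poissonMixCoef Δ m|) ≤ t ∧
    (Δ.totalVariation Set.univ).toReal ≤ 1 ∧
    x = sIntegral Δ fun θ => Real.exp (-(s * θ))}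

set_option linter.unusedSectionVars false
set_option maxHeartbeats 1000000

open Complex

namespace PoisAux

noncomputable def g (m : ℕ) (θ : ℝ) : ℝ := Real.exp (-θ) * θ ^ m / (m.factorial : ℝ)

variable {μ : Measure ℝ} [IsFiniteMeasure μ]

lemma ae_nonneg (hμ : μ (Set.Iio 0) = 0) : ∀ᵐ θ ∂μ, 0 ≤ θ := by
  rw [ae_iff]
  convert hμ using 2
  ext θ; simp [Set.Iio, not_le]

lemma g_nonneg {m : ℕ} {θ : ℝ} (hθ : 0 ≤ θ) : 0 ≤ g m θ := by
  unfold g; positivity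

lemma g_le_one {m : ℕ} {θ : ℝ} (hθ : 0 ≤ θ) : g m θ ≤ 1 := by
  unfold g
  rw [div_le_one (by positivity)]
  have h1 : θ ^ m / (m.factorial : ℝ) ≤ Real.exp θ := by
    have hs : Summable (fun n : ℕ => θ ^ n / (n.factorial : ℝ)) :=
      NormedSpace.expSeries_div_summable θ
    have h : Real.exp θ = ∑' n : ℕ, θ ^ n / n.factorial := by
      rw [Real.exp_eq_exp_ℝ, NormedSpace.exp_eq_tsum_div]
    rw [h]
    exact Summable.le_tsum hs m (fun n _ => by positivity)
  have h2 : θ ^ m ≤ Real.exp θ * m.factorial := by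
    rw [div_le_iff₀ (by positivity)] at h1; linarith
  calc Real.exp (-θ) * θ ^ m ≤ Real.exp (-θ) * (Real.exp θ * m.factorial) := by gcongr
    _ = m.factorial := by rw [← mul_assoc, ← Real.exp_add]; simp

lemma g_hasSum {θ : ℝ} : HasSum (fun m => g m θ) (Real.exp (-θ) * Real.exp θ) := by
  have h : Real.exp θ = ∑' m : ℕ, θ ^ m / m.factorial := by
    rw [Real.exp_eq_exp_ℝ, NormedSpace.exp_eq_tsum_div]
  have hs : Summable (fun m : ℕ => θ ^ m / (m.factorial : ℝ)) :=
    NormedSpace.expSeries_div_summable θ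
  have := (hs.hasSum_iff.mpr h.symm).mul_left (Real.exp (-θ))
  have e : (fun m => g m θ) = fun m => Real.exp (-θ) * (θ ^ m / m.factorial) := by
    funext m; unfold g; ring
  rw [e]; exact this

lemma g_tsum {θ : ℝ} (hθ : 0 ≤ θ) : ∑' m, g m θ = 1 := by
  rw [g_hasSum.tsum_eq, ← Real.exp_add]; simp

lemma g_summable {θ : ℝ} : Summable (fun m => g m θ) := g_hasSum.summable

lemma g_integrable (m : ℕ) (hμ : μ (Set.Iio 0) = 0) : Integrable (g m) μ := by
  refine Integrable.mono' (integrable_const 1) ?_ ?_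
  · exact (Continuous.measurable (by unfold g; fun_prop : Continuous (g m))).aestronglyMeasurable
  · filter_upwards [ae_nonneg hμ] with θ hθ
    rw [Real.norm_eq_abs, _root_.abs_of_nonneg (g_nonneg hθ)]
    exact g_le_one hθ

lemma intg_nonneg (m : ℕ) (hμ : μ (Set.Iio 0) = 0) : 0 ≤ ∫ θ, g m θ ∂μ :=
  integral_nonneg_of_ae <| by filter_upwards [ae_nonneg hμ] with θ hθ using g_nonneg hθ

lemma summable_intg (hμ : μ (Set.Iio 0) = 0) :
    Summable (fun m => ∫ θ, g m θ ∂μ) := by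
  apply summable_of_sum_range_le (c := (μ Set.univ).toReal) (fun m => intg_nonneg m hμ)
  intro n
  rw [← integral_finset_sum _ (fun m _ => g_integrable m hμ)]
  calc ∫ θ, ∑ m ∈ Finset.range n, g m θ ∂μ ≤ ∫ _, (1:ℝ) ∂μ := by
        apply integral_mono_ae (integrable_finset_sum _ (fun m _ => g_integrable m hμ))
          (integrable_const 1)
        filter_upwards [ae_nonneg hμ] with θ hθ
        calc ∑ m ∈ Finset.range n, g m θ ≤ ∑' m, g m θ :=
              Summable.sum_le_tsum _ (fun m _ => g_nonneg hθ) g_summable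
          _ = 1 := g_tsum hθ
    _ = (μ Set.univ).toReal := by simp [Measure.real]

lemma tsum_intg_le (hμ : μ (Set.Iio 0) = 0) :
    ∑' m, ∫ θ, g m θ ∂μ ≤ (μ Set.univ).toReal := by
  apply Summable.tsum_le_of_sum_le (summable_intg hμ)
  intro n
  rw [← integral_finset_sum _ (fun m _ => g_integrable m hμ)]
  calc ∫ θ, ∑ m ∈ n, g m θ ∂μ ≤ ∫ _, (1:ℝ) ∂μ := by
        apply integral_mono_ae (integrable_finset_sum _ (fun m _ => g_integrable m hμ))
          (integrable_const 1)
        filter_upwards [ae_nonneg hμ] with θ hθ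
        calc ∑ m ∈ n, g m θ ≤ ∑' m, g m θ :=
              Summable.sum_le_tsum _ (fun m _ => g_nonneg hθ) g_summable
          _ = 1 := g_tsum hθ
    _ = (μ Set.univ).toReal := by simp [Measure.real]


/-- pointwise series identity, valid for every `θ` and `w`. -/
lemma tsum_g_mul_pow (θ : ℝ) (w : ℂ) :
    ∑' m, ((g m θ : ℝ) : ℂ) * w ^ m = Complex.exp (θ * (w - 1)) := by
  have h : ∀ m : ℕ, ((g m θ : ℝ) : ℂ) * w ^ m
      = Complex.exp (-θ) * ((θ * w) ^ m / m.factorial) := by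
    intro m
    unfold g
    push_cast [Complex.ofReal_exp]
    ring
  rw [funext h, tsum_mul_left]
  have h2 : ∑' m : ℕ, ((θ:ℂ) * w) ^ m / m.factorial = Complex.exp (θ * w) := by
    rw [Complex.exp_eq_exp_ℂ, NormedSpace.exp_eq_tsum_div]
  rw [h2, ← Complex.exp_add]
  ring_nf

lemma summable_g_pow (θ : ℝ) (w : ℂ) : Summable (fun m => ((g m θ : ℝ) : ℂ) * w ^ m) := by
  have h : ∀ m : ℕ, ((g m θ : ℝ) : ℂ) * w ^ m
      = Complex.exp (-θ) * ((θ * w) ^ m / m.factorial) := by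
    intro m; unfold g; push_cast [Complex.ofReal_exp]; ring
  rw [funext h]
  exact (NormedSpace.expSeries_div_summable ((θ:ℂ) * w)).mul_left _

/-- The key series representation of the Laplace transform on the disk `|w| ≤ 1`. -/
lemma laplace_seriesRep (hμ : μ (Set.Iio 0) = 0) (w : ℂ) (hw : ‖w‖ ≤ 1) :
    ∫ θ, Complex.exp (θ * (w - 1)) ∂μ = ∑' m, ((∫ θ, g m θ ∂μ : ℝ) : ℂ) * w ^ m := by
  have hint : ∀ m : ℕ, Integrable (fun θ => ((g m θ : ℝ) : ℂ) * w ^ m) μ := by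
    intro m
    exact (((g_integrable m hμ).ofReal (𝕜 := ℂ)).mul_const _)
  have hnorm : ∀ m : ℕ, ∫ θ, ‖((g m θ : ℝ) : ℂ) * w ^ m‖ ∂μ ≤ ∫ θ, g m θ ∂μ := by
    intro m
    apply integral_mono_ae ((hint m).norm) (g_integrable m hμ)
    filter_upwards [ae_nonneg hμ] with θ hθ
    rw [norm_mul, Complex.norm_real, Real.norm_eq_abs, _root_.abs_of_nonneg (g_nonneg hθ)]
    calc g m θ * ‖w ^ m‖ ≤ g m θ * 1 := by
          gcongr
          · exact g_nonneg hθ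
          · rw [norm_pow]; exact pow_le_one₀ (norm_nonneg w) hw
      _ = g m θ := mul_one _
  have hsum : Summable (fun m => ∫ θ, ‖((g m θ : ℝ) : ℂ) * w ^ m‖ ∂μ) := by
    apply Summable.of_nonneg_of_le (fun m => integral_nonneg (fun θ => norm_nonneg _)) hnorm
      (summable_intg hμ)
  rw [show (∫ θ, Complex.exp (θ * (w - 1)) ∂μ)
      = ∫ θ, ∑' m, ((g m θ : ℝ) : ℂ) * w ^ m ∂μ from
      integral_congr_ae (Filter.Eventually.of_forall fun θ => (tsum_g_mul_pow θ w).symm),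
    ← integral_tsum_of_summable_integral_norm hint hsum]
  congr 1
  funext m
  rw [integral_mul_const]
  exact congrArg (· * w ^ m) (integral_ofReal (𝕜 := ℂ))

/-- bound on the closed left half plane. -/
lemma laplace_norm_le (hμ : μ (Set.Iio 0) = 0) {z : ℂ} (hz : z.re ≤ 0) :
    ‖∫ θ, Complex.exp (θ * z) ∂μ‖ ≤ (μ Set.univ).toReal := by
  have := norm_integral_le_of_norm_le_const (μ := μ) (C := 1)
    (f := fun θ : ℝ => Complex.exp (θ * z)) ?_
  · simpa [Measure.real] using this
  · filter_upwards [ae_nonneg hμ] with θ hθ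
    rw [Complex.norm_exp]
    simp only [mul_re, ofReal_re, ofReal_im, zero_mul, sub_zero]
    exact Real.exp_le_one_iff.mpr (mul_nonpos_of_nonneg_of_nonpos hθ hz)

lemma integrable_cexp (hμ : μ (Set.Iio 0) = 0) {z : ℂ} (hz : z.re ≤ 0) :
    Integrable (fun θ : ℝ => Complex.exp (θ * z)) μ := by
  refine Integrable.mono' (integrable_const 1) ?_ ?_
  · exact (Continuous.aestronglyMeasurable (by fun_prop))
  · filter_upwards [ae_nonneg hμ] with θ hθ
    rw [Complex.norm_exp]
    simp only [mul_re, ofReal_re, ofReal_im, zero_mul, sub_zero]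
    exact Real.exp_le_one_iff.mpr (mul_nonpos_of_nonneg_of_nonpos hθ hz)

lemma laplace_differentiableAt (hμ : μ (Set.Iio 0) = 0) {z₀ : ℂ} (hz : z₀.re < 0) :
    DifferentiableAt ℂ (fun z => ∫ θ, Complex.exp (θ * z) ∂μ) z₀ := by
  set a : ℝ := -z₀.re / 2 with ha
  have ha0 : 0 < a := by simp [ha]; linarith
  have key := hasDerivAt_integral_of_dominated_loc_of_deriv_le (μ := μ) (𝕜 := ℂ)
    (F := fun z θ => Complex.exp (θ * z)) (F' := fun z θ => θ * Complex.exp (θ * z))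
    (x₀ := z₀) (bound := fun _ => a⁻¹) (s := Metric.ball z₀ a) (Metric.ball_mem_nhds z₀ ha0) ?_ (integrable_cexp hμ hz.le) ?_ ?_
    (integrable_const _) ?_
  · exact key.2.differentiableAt
  · filter_upwards with z
    exact Continuous.aestronglyMeasurable (by fun_prop)
  · exact Continuous.aestronglyMeasurable (by fun_prop)
  · filter_upwards [ae_nonneg hμ] with θ hθ
    intro z hzball
    have hre : z.re ≤ -a := by
      have h1 : |z.re - z₀.re| ≤ ‖z - z₀‖ := by
        rw [← Complex.sub_re]; exact Complex.abs_re_le_norm _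
      have h2 : ‖z - z₀‖ < a := by rwa [Metric.mem_ball, dist_eq_norm] at hzball
      have := abs_le.mp h1
      simp [ha] at *; linarith [this.2]
    rw [norm_mul, Complex.norm_real, Real.norm_eq_abs, _root_.abs_of_nonneg hθ,
      Complex.norm_exp]
    simp only [mul_re, ofReal_re, ofReal_im, zero_mul, sub_zero]
    calc θ * Real.exp (θ * z.re) ≤ θ * Real.exp (-(a * θ)) := by
          gcongr
          nlinarith
      _ ≤ a⁻¹ := by
          rw [Real.exp_neg, ← div_eq_mul_inv, div_le_iff₀ (Real.exp_pos _)]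
          calc θ = a⁻¹ * (a * θ) := by field_simp
            _ ≤ a⁻¹ * Real.exp (a * θ) := by
                gcongr
                linarith [Real.add_one_le_exp (a * θ)]
  · filter_upwards with θ
    intro z _
    have h1 : HasDerivAt (fun z : ℂ => (θ:ℂ) * z) θ z := by
      simpa using (hasDerivAt_id z).const_mul (θ:ℂ)
    simpa [mul_comm] using h1.cexp

lemma laplace_continuousOn (hμ : μ (Set.Iio 0) = 0) :
    ContinuousOn (fun z => ∫ θ, Complex.exp (θ * z) ∂μ) {z : ℂ | z.re ≤ 0} := by
  intro z₀ hz₀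
  apply continuousWithinAt_of_dominated (bound := fun _ => (1:ℝ))
  · filter_upwards with z
    exact Continuous.aestronglyMeasurable (by fun_prop)
  · rw [eventually_nhdsWithin_iff]
    filter_upwards with z hz
    filter_upwards [ae_nonneg hμ] with θ hθ
    rw [Complex.norm_exp]
    simp only [mul_re, ofReal_re, ofReal_im, zero_mul, sub_zero]
    exact Real.exp_le_one_iff.mpr (mul_nonpos_of_nonneg_of_nonpos hθ hz)
  · exact integrable_const 1
  · filter_upwards with θ
    exact (Continuous.continuousAt (by fun_prop)).continuousWithinAt


section main

variable {Δ : SignedMeasure ℝ}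

/-- the complex Laplace transform of the signed measure -/
noncomputable def lap (Δ : SignedMeasure ℝ) (z : ℂ) : ℂ :=
  (∫ θ, Complex.exp (θ * z) ∂Δ.toJordanDecomposition.posPart)
    - ∫ θ, Complex.exp (θ * z) ∂Δ.toJordanDecomposition.negPart

lemma coef_eq (m : ℕ) : poissonMixCoef Δ m =
    (∫ θ, g m θ ∂Δ.toJordanDecomposition.posPart)
      - ∫ θ, g m θ ∂Δ.toJordanDecomposition.negPart := rfl

variable (hsupp : Δ.totalVariation (Set.Iio (0 : ℝ)) = 0)
include hsupp

lemma hμν : Δ.toJordanDecomposition.posPart (Set.Iio 0) = 0 ∧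
    Δ.toJordanDecomposition.negPart (Set.Iio 0) = 0 := by
  have := hsupp
  rw [SignedMeasure.totalVariation, Measure.add_apply] at this
  exact (add_eq_zero).mp this

lemma summable_abs_coef : Summable (fun m => |poissonMixCoef Δ m|) := by
  obtain ⟨hμ, hν⟩ := hμν hsupp
  apply Summable.of_nonneg_of_le (fun m => abs_nonneg _)
    (fun m => ?_) ((summable_intg hμ).add (summable_intg hν))
  rw [coef_eq]
  exact (abs_sub _ _).trans (by
    rw [_root_.abs_of_nonneg (intg_nonneg m hμ), _root_.abs_of_nonneg (intg_nonneg m hν)])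

/-- series bound on the disk `|z+1| ≤ 1`. -/
lemma lap_le_tsum (w : ℂ) (hw : ‖w‖ ≤ 1) :
    ‖lap Δ (w - 1)‖ ≤ ∑' m, |poissonMixCoef Δ m| := by
  obtain ⟨hμ, hν⟩ := hμν hsupp
  set μ := Δ.toJordanDecomposition.posPart
  set ν := Δ.toJordanDecomposition.negPart
  have hsμ : Summable (fun m => ((∫ θ, g m θ ∂μ : ℝ) : ℂ) * w ^ m) := by
    apply Summable.of_norm_bounded (summable_intg hμ)
    intro m
    rw [norm_mul, Complex.norm_real, Real.norm_eq_abs,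
      _root_.abs_of_nonneg (intg_nonneg m hμ), norm_pow]
    calc _ ≤ (∫ θ, g m θ ∂μ) * 1 := by
          gcongr
          · exact intg_nonneg m hμ
          · exact pow_le_one₀ (norm_nonneg w) hw
      _ = _ := mul_one _
  have hsν : Summable (fun m => ((∫ θ, g m θ ∂ν : ℝ) : ℂ) * w ^ m) := by
    apply Summable.of_norm_bounded (summable_intg hν)
    intro m
    rw [norm_mul, Complex.norm_real, Real.norm_eq_abs,
      _root_.abs_of_nonneg (intg_nonneg m hν), norm_pow]
    calc _ ≤ (∫ θ, g m θ ∂ν) * 1 := by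
          gcongr
          · exact intg_nonneg m hν
          · exact pow_le_one₀ (norm_nonneg w) hw
      _ = _ := mul_one _
  have heq : lap Δ (w - 1) = ∑' m, ((poissonMixCoef Δ m : ℝ) : ℂ) * w ^ m := by
    rw [lap, laplace_seriesRep hμ w hw, laplace_seriesRep hν w hw, ← Summable.tsum_sub hsμ hsν]
    congr 1; funext m; rw [coef_eq]; push_cast; ring
  rw [heq]
  have hsn : Summable (fun m => ‖((poissonMixCoef Δ m : ℝ) : ℂ) * w ^ m‖) := by
    apply Summable.of_nonneg_of_le (fun m => norm_nonneg _) (fun m => ?_)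
      (summable_abs_coef hsupp)
    rw [norm_mul, Complex.norm_real, Real.norm_eq_abs, norm_pow]
    calc _ ≤ |poissonMixCoef Δ m| * 1 :=
          mul_le_mul_of_nonneg_left (pow_le_one₀ (norm_nonneg w) hw) (abs_nonneg _)
      _ = _ := mul_one _
  calc ‖∑' m, ((poissonMixCoef Δ m : ℝ) : ℂ) * w ^ m‖
      ≤ ∑' m, ‖((poissonMixCoef Δ m : ℝ) : ℂ) * w ^ m‖ := norm_tsum_le_tsum_norm hsn
    _ ≤ ∑' m, |poissonMixCoef Δ m| := by
        apply Summable.tsum_le_tsum _ hsn (summable_abs_coef hsupp)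
        intro m
        rw [norm_mul, Complex.norm_real, Real.norm_eq_abs, norm_pow]
        calc _ ≤ |poissonMixCoef Δ m| * 1 :=
              mul_le_mul_of_nonneg_left (pow_le_one₀ (norm_nonneg w) hw) (abs_nonneg _)
          _ = _ := mul_one _

lemma lap_le_tv {z : ℂ} (hz : z.re ≤ 0) :
    ‖lap Δ z‖ ≤ (Δ.totalVariation Set.univ).toReal := by
  obtain ⟨hμ, hν⟩ := hμν hsupp
  have h1 := laplace_norm_le hμ hz
  have h2 := laplace_norm_le hν hz
  have h3 : (Δ.totalVariation Set.univ).toReal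
      = (Δ.toJordanDecomposition.posPart Set.univ).toReal
        + (Δ.toJordanDecomposition.negPart Set.univ).toReal := by
    rw [SignedMeasure.totalVariation, Measure.add_apply,
      ENNReal.toReal_add (measure_ne_top _ _) (measure_ne_top _ _)]
  rw [h3]
  exact (norm_sub_le _ _).trans (add_le_add h1 h2)

lemma lap_diffAt {z₀ : ℂ} (hz : z₀.re < 0) : DifferentiableAt ℂ (lap Δ) z₀ := by
  obtain ⟨hμ, hν⟩ := hμν hsupp
  exact (laplace_differentiableAt hμ hz).sub (laplace_differentiableAt hν hz)

lemma lap_contOn : ContinuousOn (lap Δ) {z : ℂ | z.re ≤ 0} := by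
  obtain ⟨hμ, hν⟩ := hμν hsupp
  exact (laplace_continuousOn hμ).sub (laplace_continuousOn hν)

end main

section main2

variable {Δ : SignedMeasure ℝ}
variable (hsupp : Δ.totalVariation (Set.Iio (0 : ℝ)) = 0)
include hsupp

lemma hadamard_step {t : ℝ} (ht : (∑' m, |poissonMixCoef Δ m|) ≤ t)
    (htv : (Δ.totalVariation Set.univ).toReal ≤ 1)
    {s σ w₀ : ℝ} (hs : 0 < s) (hw₀ : w₀ = 1 - 2 / s) (hw₀0 : 0 ≤ w₀)
    (hσw : w₀ < σ) (hσ1 : σ < 1) :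
    ‖lap Δ (-(s : ℂ))‖ ≤ t ^ (1 - w₀ / σ) := by
  have hσ0 : 0 < σ := lt_of_le_of_lt hw₀0 hσw
  set H : ℂ → ℂ := fun w => lap Δ (2 / ((σ : ℂ) * w - 1)) with hH
  have hre_inner : ∀ w : ℂ, ((σ : ℂ) * w - 1).re = σ * w.re - 1 := fun w => by
    simp [Complex.sub_re, Complex.mul_re]
  have hreneg : ∀ w : ℂ, w.re ≤ 1 → ((σ : ℂ) * w - 1).re < 0 := by
    intro w hw
    rw [hre_inner w]
    nlinarith
  have hne : ∀ w : ℂ, w.re ≤ 1 → ((σ : ℂ) * w - 1) ≠ 0 := by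
    intro w hw h
    have := hreneg w hw
    rw [h] at this
    simp at this
  have hzre : ∀ w : ℂ, w.re ≤ 1 → ((2 : ℂ) / ((σ : ℂ) * w - 1)).re < 0 := by
    intro w hw
    rw [Complex.div_re]
    have h2 : 0 < Complex.normSq ((σ : ℂ) * w - 1) := Complex.normSq_pos.mpr (hne w hw)
    simp only [show (2 : ℂ).re = 2 from rfl, show (2 : ℂ).im = 0 from rfl, zero_mul,
      zero_div, add_zero]
    exact div_neg_of_neg_of_pos (by linarith [hreneg w hw]) h2
  have hdiff : DifferentiableOn ℂ H (Complex.HadamardThreeLines.verticalStrip 0 1) := by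
    intro w hw
    have hw1 : w.re ≤ 1 := le_of_lt hw.2
    have hinner : DifferentiableAt ℂ (fun w : ℂ => (2 : ℂ) / ((σ : ℂ) * w - 1)) w :=
      (differentiableAt_const 2).div ((differentiableAt_id.const_mul _).sub_const 1) (hne w hw1)
    exact ((lap_diffAt hsupp (hzre w hw1)).comp w hinner).differentiableWithinAt
  have hcont : ContinuousOn H (Complex.HadamardThreeLines.verticalClosedStrip 0 1) := by
    apply (lap_contOn hsupp).comp
    · exact ContinuousOn.div continuousOn_const
        (Continuous.continuousOn (by fun_prop)) (fun w hw => hne w hw.2)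
    · intro w hw
      exact le_of_lt (hzre w hw.2)
  have hclos : closure (Complex.HadamardThreeLines.verticalStrip 0 1)
      ⊆ Complex.HadamardThreeLines.verticalClosedStrip 0 1 := by
    rw [Complex.HadamardThreeLines.verticalStrip, Complex.closure_preimage_re,
      closure_Ioo (zero_ne_one)]
    exact subset_rfl
  have hB : BddAbove ((norm ∘ H) '' Complex.HadamardThreeLines.verticalClosedStrip 0 1) := by
    refine ⟨1, ?_⟩
    rintro y ⟨w, hw, rfl⟩
    exact (lap_le_tv hsupp (le_of_lt (hzre w hw.2))).trans htv
  have ha : ∀ w : ℂ, w ∈ Complex.re ⁻¹' {0} → ‖H w‖ ≤ t := by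
    intro w hw
    have hw0 : w.re = 0 := hw
    have hu := hne w (by rw [hw0]; norm_num)
    have he : (2 : ℂ) / ((σ : ℂ) * w - 1) + 1 = ((σ : ℂ) * w + 1) / ((σ : ℂ) * w - 1) := by
      field_simp
      ring
    have hnorm1 : ‖(2 : ℂ) / ((σ : ℂ) * w - 1) + 1‖ ≤ 1 := by
      rw [he, norm_div]
      have hns : Complex.normSq ((σ : ℂ) * w + 1) = Complex.normSq ((σ : ℂ) * w - 1) := by
        simp [Complex.normSq_apply, Complex.add_re, Complex.sub_re, Complex.mul_re,
          Complex.mul_im, Complex.add_im, Complex.sub_im, hw0]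
      have heq : ‖(σ : ℂ) * w + 1‖ = ‖(σ : ℂ) * w - 1‖ := by
        rw [Complex.norm_def, Complex.norm_def, hns]
      rw [heq, div_self (norm_ne_zero_iff.mpr hu)]
    have harg : H w = lap Δ (((2 : ℂ) / ((σ : ℂ) * w - 1) + 1) - 1) := by
      rw [hH]
      ring_nf
    rw [harg]
    exact (lap_le_tsum hsupp _ hnorm1).trans ht
  have hb : ∀ w : ℂ, w ∈ Complex.re ⁻¹' {1} → ‖H w‖ ≤ 1 := by
    intro w hw
    have hw1 : w.re = 1 := hw
    exact (lap_le_tv hsupp (le_of_lt (hzre w (le_of_eq hw1)))).trans htv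
  have hmem : ((w₀ / σ : ℝ) : ℂ) ∈ Complex.HadamardThreeLines.verticalClosedStrip 0 1 := by
    constructor
    · exact div_nonneg hw₀0 hσ0.le
    · exact (div_le_one hσ0).mpr hσw.le
  have hmain := Complex.HadamardThreeLines.norm_le_interp_of_mem_verticalClosedStrip₀₁' H hmem
    ⟨hdiff, hcont.mono hclos⟩ hB ha hb
  have hHval : H ((w₀ / σ : ℝ) : ℂ) = lap Δ (-(s : ℂ)) := by
    have hs' : (s : ℂ) ≠ 0 := Complex.ofReal_ne_zero.mpr hs.ne'
    have hσ' : (σ : ℂ) ≠ 0 := Complex.ofReal_ne_zero.mpr hσ0.ne'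
    have h1 : (σ : ℂ) * ((w₀ / σ : ℝ) : ℂ) - 1 = -(2 / s : ℂ) := by
      push_cast [hw₀]
      field_simp
      ring
    show lap Δ (2 / ((σ : ℂ) * ((w₀ / σ : ℝ) : ℂ) - 1)) = lap Δ (-(s : ℂ))
    rw [h1]
    congr 1
    field_simp
  rw [hHval] at hmain
  simpa [Complex.ofReal_re, Real.one_rpow] using hmain


end main2

end PoisAux

/-- For the Poisson kernel, `δ(s,t) ≤ t^{min(1, 2/s)}` for every `s > 0` and `0 ≤ t ≤ 1`. -/
theorem deltaPoisson_upper (s t : ℝ) (hs : 0 < s) (ht0 : 0 ≤ t) (ht1 : t ≤ 1) :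
    deltaPoisson s t ≤ t ^ (min 1 (2 / s)) := by
  apply Real.sSup_le _ (Real.rpow_nonneg ht0 _)
  rintro x ⟨Δ, hsupp, ht, htv, rfl⟩
  have hx : ((sIntegral Δ fun θ => Real.exp (-(s * θ))) : ℂ) = PoisAux.lap Δ (-(s : ℂ)) := by
    rw [PoisAux.lap, sIntegral]
    push_cast
    congr 1
    all_goals
      refine Eq.symm ((integral_congr_ae ?_).trans (integral_ofReal (𝕜 := ℂ)))
      filter_upwards with θ
      show Complex.exp (θ * -(s : ℂ)) = ((Real.exp (-(s * θ)) : ℝ) : ℂ)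
      rw [Complex.ofReal_exp]
      congr 1
      push_cast
      ring
  have hxle : (sIntegral Δ fun θ => Real.exp (-(s * θ))) ≤ ‖PoisAux.lap Δ (-(s : ℂ))‖ := by
    calc (sIntegral Δ fun θ => Real.exp (-(s * θ)))
        ≤ |sIntegral Δ fun θ => Real.exp (-(s * θ))| := le_abs_self _
      _ = ‖((sIntegral Δ fun θ => Real.exp (-(s * θ))) : ℂ)‖ := (Complex.norm_real _).symm
      _ = _ := by rw [hx]
  by_cases hs2 : s ≤ 2
  · have hmin : min 1 (2 / s) = 1 := min_eq_left ((le_div_iff₀ hs).mpr (by linarith))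
    rw [hmin, Real.rpow_one]
    have hw : ‖(1 : ℂ) - (s : ℂ)‖ ≤ 1 := by
      rw [show (1 : ℂ) - (s : ℂ) = ((1 - s : ℝ) : ℂ) by push_cast; ring, Complex.norm_real,
        Real.norm_eq_abs, abs_le]
      constructor <;> linarith
    have hb := PoisAux.lap_le_tsum hsupp ((1 : ℂ) - (s : ℂ)) hw
    rw [show ((1 : ℂ) - (s : ℂ)) - 1 = -(s : ℂ) by ring] at hb
    exact hxle.trans (hb.trans ht)
  · push_neg at hs2
    have h2s : 2 / s < 1 := (div_lt_one hs).mpr hs2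
    have hmin : min 1 (2 / s) = 2 / s := min_eq_right h2s.le
    rw [hmin]
    refine hxle.trans ?_
    have h2spos : 0 < 2 / s := by positivity
    have hw₀0 : (0:ℝ) ≤ 1 - 2 / s := by linarith
    have hw₀1 : (1:ℝ) - 2 / s < 1 := by linarith
    rcases eq_or_lt_of_le ht0 with h0 | htpos
    · have hσpos : (0 : ℝ) < ((1 - 2 / s) + 1) / 2 := by linarith
      have hσw : 1 - 2 / s < ((1 - 2 / s) + 1) / 2 := by linarith
      have hσ1 : ((1 - 2 / s) + 1) / 2 < 1 := by linarith
      have hfrac : (1 - 2 / s) / (((1 - 2 / s) + 1) / 2) < 1 := (div_lt_one hσpos).mpr hσw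
      have hstep := PoisAux.hadamard_step hsupp ht htv hs rfl hw₀0 hσw hσ1
      rw [← h0] at hstep ⊢
      rw [Real.zero_rpow (by positivity)]
      rwa [Real.zero_rpow (sub_pos.mpr hfrac).ne'] at hstep
    · have hlim : Filter.Tendsto (fun σ : ℝ => t ^ (1 - (1 - 2 / s) / σ))
          (nhdsWithin 1 (Set.Iio 1)) (nhds (t ^ (2 / s))) := by
        have hc : ContinuousAt (fun σ : ℝ => 1 - (1 - 2 / s) / σ) 1 :=
          continuousAt_const.sub (ContinuousAt.div continuousAt_const continuousAt_id one_ne_zero)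
        have h3 : Filter.Tendsto (fun σ : ℝ => 1 - (1 - 2 / s) / σ) (nhds 1) (nhds (2 / s)) := by
          have h5 := hc.tendsto
          rwa [show (1 : ℝ) - (1 - 2 / s) / 1 = 2 / s from by rw [div_one]; ring] at h5
        have h4 : Filter.Tendsto (fun x : ℝ => t ^ x) (nhds (2 / s)) (nhds (t ^ (2 / s))) :=
          (Real.continuousAt_const_rpow htpos.ne').tendsto
        exact (h4.comp h3).mono_left nhdsWithin_le_nhds
      apply ge_of_tendsto hlim
      filter_upwards [Ioo_mem_nhdsLT_of_mem (Set.mem_Ioc.mpr ⟨hw₀1, le_refl 1⟩)] with σ hσ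
      exact PoisAux.hadamard_step hsupp ht htv hs rfl hw₀0 hσ.1 hσ.2
end

section
/- Concavity transfer for inverse covariance quadratic forms: let μ ↦ Σ(μ) be a map into symmetric positive definite matrices such that μ ↦ √(⟨Σ(μ)y, y⟩) is concave for every fixed y. Then for any μ₀, μ₁, any λ ∈ (0,1], and any vector a, ⟨Σ(λμ₁ + (1-λ)μ₀)^{-1} a, a⟩^{1/2} ≤ (1/λ)·⟨Σ(μ₁)^{-1} a, a⟩^{1/2}. -/
open Matrix

private lemma inv_quad_mono {n : ℕ} {A B : Matrix (Fin n) (Fin n) ℝ}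
    (hA : A.PosDef) (hB : B.PosDef)
    (h : ∀ y : Fin n → ℝ, A.mulVec y ⬝ᵥ y ≤ B.mulVec y ⬝ᵥ y) (a : Fin n → ℝ) :
    B⁻¹.mulVec a ⬝ᵥ a ≤ A⁻¹.mulVec a ⬝ᵥ a := by
  set y := B⁻¹.mulVec a with hy
  set w := A⁻¹.mulVec a with hw
  have hBy : B.mulVec y = a := by
    rw [hy, mulVec_mulVec, Matrix.mul_nonsing_inv _ (isUnit_iff_ne_zero.mpr hB.det_pos.ne'), one_mulVec]
  have hAw : A.mulVec w = a := by
    rw [hw, mulVec_mulVec, Matrix.mul_nonsing_inv _ (isUnit_iff_ne_zero.mpr hA.det_pos.ne'), one_mulVec]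
  -- symmetry: A *ᵥ y ⬝ᵥ w = a ⬝ᵥ y
  have hAT : Aᵀ = A := hA.isHermitian.eq
  have hsym : A.mulVec y ⬝ᵥ w = a ⬝ᵥ y := by
    rw [dotProduct_comm, dotProduct_mulVec, ← mulVec_transpose, hAT, hAw,
      dotProduct_comm]
  have hpos : 0 ≤ A.mulVec (y - w) ⬝ᵥ (y - w) := by
    have := hA.posSemidef.dotProduct_mulVec_nonneg (y - w)
    simpa [dotProduct_comm] using this
  have hexp : A.mulVec (y - w) ⬝ᵥ (y - w)
      = A.mulVec y ⬝ᵥ y - 2 * (a ⬝ᵥ y) + a ⬝ᵥ w := by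
    rw [Matrix.mulVec_sub, sub_dotProduct, dotProduct_sub,
      dotProduct_sub, hAw, hsym]
    ring
  have hq : A.mulVec y ⬝ᵥ y ≤ B.mulVec y ⬝ᵥ y := h y
  have hBval : B.mulVec y ⬝ᵥ y = a ⬝ᵥ y := by rw [hBy]
  have hyA : y ⬝ᵥ a = a ⬝ᵥ y := dotProduct_comm _ _
  have hwA : w ⬝ᵥ a = a ⬝ᵥ w := dotProduct_comm _ _
  -- B⁻¹ a ⬝ᵥ a = y ⬝ᵥ a, A⁻¹ a ⬝ᵥ a = w ⬝ᵥ a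
  show y ⬝ᵥ a ≤ w ⬝ᵥ a
  rw [hyA, hwA]
  linarith

/-- Concavity transfer for inverse covariance quadratic forms: if `μ ↦ √⟨Σ(μ)y, y⟩` is
concave for every fixed `y` and each `Σ(μ)` is symmetric positive definite, then
`⟨Σ(λμ₁ + (1-λ)μ₀)⁻¹ a, a⟩^{1/2} ≤ (1/λ)·⟨Σ(μ₁)⁻¹ a, a⟩^{1/2}` for `λ ∈ (0,1]`. -/
theorem inverse_covariance_concavity_transfer
    {E : Type*} [AddCommGroup E] [Module ℝ E] {n : ℕ}
    (Sig : E → Matrix (Fin n) (Fin n) ℝ)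
    (hpd : ∀ μ : E, (Sig μ).PosDef)
    (hconc : ∀ y : Fin n → ℝ,
      ConcaveOn ℝ Set.univ fun μ : E => Real.sqrt ((Sig μ).mulVec y ⬝ᵥ y))
    (μ₀ μ₁ : E) (lam : ℝ) (hlam0 : 0 < lam) (hlam1 : lam ≤ 1) (a : Fin n → ℝ) :
    Real.sqrt ((Sig (lam • μ₁ + (1 - lam) • μ₀))⁻¹.mulVec a ⬝ᵥ a)
      ≤ (1 / lam) * Real.sqrt ((Sig μ₁)⁻¹.mulVec a ⬝ᵥ a) := by
  set μ := lam • μ₁ + (1 - lam) • μ₀ with hμ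
  set A : Matrix (Fin n) (Fin n) ℝ := (lam ^ 2) • Sig μ₁ with hAdef
  have hlamsq : (0 : ℝ) < lam ^ 2 := by positivity
  have hA : A.PosDef := by
    refine Matrix.PosDef.of_dotProduct_mulVec_pos ?_ (fun x hx => ?_)
    · show Aᴴ = A
      have hT : (Sig μ₁)ᵀ = Sig μ₁ := (hpd μ₁).isHermitian.eq
      rw [hAdef, conjTranspose_smul]
      have hmap : (Sig μ₁)ᴴ = Sig μ₁ := (hpd μ₁).isHermitian.eq
      simp [hmap, hT]
    · have := (hpd μ₁).dotProduct_mulVec_pos hx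
      rw [hAdef]
      simp only [Matrix.smul_mulVec, dotProduct_smul, smul_eq_mul]
      exact mul_pos hlamsq this
  have hquad : ∀ y : Fin n → ℝ, A.mulVec y ⬝ᵥ y ≤ (Sig μ).mulVec y ⬝ᵥ y := by
    intro y
    have hq1 : 0 ≤ (Sig μ₁).mulVec y ⬝ᵥ y := by
      have := (hpd μ₁).posSemidef.dotProduct_mulVec_nonneg y; simpa [dotProduct_comm] using this
    have hq0 : 0 ≤ (Sig μ₀).mulVec y ⬝ᵥ y := by
      have := (hpd μ₀).posSemidef.dotProduct_mulVec_nonneg y; simpa [dotProduct_comm] using this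
    have hqb : 0 ≤ (Sig μ).mulVec y ⬝ᵥ y := by
      have := (hpd μ).posSemidef.dotProduct_mulVec_nonneg y; simpa [dotProduct_comm] using this
    have hc := (hconc y).2 (Set.mem_univ μ₁) (Set.mem_univ μ₀) hlam0.le
      (sub_nonneg.mpr hlam1) (by ring)
    simp only [smul_eq_mul] at hc
    have h1 : lam * Real.sqrt ((Sig μ₁).mulVec y ⬝ᵥ y)
        ≤ Real.sqrt ((Sig μ).mulVec y ⬝ᵥ y) := by
      have h0 : 0 ≤ (1 - lam) * Real.sqrt ((Sig μ₀).mulVec y ⬝ᵥ y) := by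
        have := Real.sqrt_nonneg ((Sig μ₀).mulVec y ⬝ᵥ y)
        nlinarith
      calc lam * Real.sqrt ((Sig μ₁).mulVec y ⬝ᵥ y)
          ≤ lam * Real.sqrt ((Sig μ₁).mulVec y ⬝ᵥ y)
            + (1 - lam) * Real.sqrt ((Sig μ₀).mulVec y ⬝ᵥ y) := by linarith
        _ ≤ Real.sqrt ((Sig μ).mulVec y ⬝ᵥ y) := by rw [hμ]; exact hc
    have hsq : (lam * Real.sqrt ((Sig μ₁).mulVec y ⬝ᵥ y)) ^ 2
        ≤ Real.sqrt ((Sig μ).mulVec y ⬝ᵥ y) ^ 2 := by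
      apply pow_le_pow_left₀ (by positivity) h1
    rw [Real.sq_sqrt hqb, mul_pow, Real.sq_sqrt hq1] at hsq
    calc A.mulVec y ⬝ᵥ y = lam ^ 2 * ((Sig μ₁).mulVec y ⬝ᵥ y) := by
          rw [hAdef]; simp [Matrix.smul_mulVec, smul_dotProduct]
      _ ≤ (Sig μ).mulVec y ⬝ᵥ y := hsq
  have key := inv_quad_mono hA (hpd μ) hquad a
  have hAinv : A⁻¹ = (lam ^ 2)⁻¹ • (Sig μ₁)⁻¹ := by
    have : Invertible (lam ^ 2) := invertibleOfNonzero hlamsq.ne'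
    rw [hAdef, Matrix.inv_smul (A := Sig μ₁) (k := lam ^ 2) (isUnit_iff_ne_zero.mpr (hpd μ₁).det_pos.ne'), invOf_eq_inv]
  rw [hAinv] at key
  simp only [Matrix.smul_mulVec, smul_dotProduct, smul_eq_mul] at key
  have hb0 : 0 ≤ (Sig μ)⁻¹.mulVec a ⬝ᵥ a := by
    have := (hpd μ).inv.posSemidef.dotProduct_mulVec_nonneg a; simpa [dotProduct_comm] using this
  have := Real.sqrt_le_sqrt key
  rw [Real.sqrt_mul (by positivity), Real.sqrt_inv, Real.sqrt_sq hlam0.le] at this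
  simpa [one_div] using this
end
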